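/- arXiv:1503.06668 — 11 statements merged into one kernel-verified Lean document; each statement's English description precedes it below -/
import Mathlib

section
/- Let F be a field, n ≥ 1, and let M be the n×n matrix over F whose first row is (-α_{n-1}, -α_{n-2}, ..., -α_1, -α_0), whose entries on the subdiagonal (positions (i+1, i) for 1 ≤ i ≤ n-1) are 1, whose last column has entry -c_i in row i+1 for 1 ≤ i ≤ n-1, and which is 0 elsewhere, for arbitrary α_0,...,α_{n-1}, c_1,...,c_{n-1} ∈ F. Then the minimal polynomial of M is equal to its characteristic polynomial. -/
/-- The matrix `M(α_0,...,α_{n-1}; c_1,...,c_{n-1})`: first row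
`(-α_{n-1}, -α_{n-2}, ..., -α_1, -α_0)`, entries `1` on the subdiagonal
(positions `(i+1, i)` for `1 ≤ i ≤ n-1`), entry `-c_i` at position `(i+1, n)`
for `1 ≤ i ≤ n-1`, and `0` elsewhere.  (The value `c 0` is never used.) -/
def specialMatrix {R : Type*} [Ring R] (n : ℕ) (α c : Fin n → R) :
    Matrix (Fin n) (Fin n) R :=
  Matrix.of fun i j =>
    if (i : ℕ) = 0 then -α j.rev
    else if (i : ℕ) = (j : ℕ) + 1 then 1
    else if (j : ℕ) = n - 1 then -c i
    else 0

open Polynomial Matrix in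
lemma specialMatrix_triangle {F : Type*} [Field F] (n : ℕ) (hn : 1 ≤ n)
    (α c : Fin n → F) (m : ℕ) :
    ∀ j : Fin n,
      (m < (j : ℕ) →
        ((specialMatrix n α c ^ m) *ᵥ (fun j : Fin n => if (j : ℕ) = 0 then (1:F) else 0)) j = 0) ∧
      ((j : ℕ) = m →
        ((specialMatrix n α c ^ m) *ᵥ (fun j : Fin n => if (j : ℕ) = 0 then (1:F) else 0)) j = 1) := by
  set A := specialMatrix n α c with hA
  set e0 : Fin n → F := fun j : Fin n => if (j : ℕ) = 0 then (1:F) else 0 with he0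
  induction m with
  | zero =>
    intro j
    simp only [pow_zero, Matrix.one_mulVec]
    constructor
    · intro hj; simp only [he0]; rw [if_neg (by omega)]
    · intro hj; simp only [he0]; rw [if_pos hj]
  | succ m ih =>
    intro j
    have hstep : (A ^ (m+1)) *ᵥ e0 = A *ᵥ ((A ^ m) *ᵥ e0) := by
      rw [pow_succ', Matrix.mulVec_mulVec]
    constructor
    · intro hj
      rw [hstep]
      rw [Matrix.mulVec]
      apply Finset.sum_eq_zero
      intro i _
      rcases lt_or_ge (m : ℕ) (i : ℕ) with hi | hi
      · rw [(ih i).1 hi, mul_zero]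
      · -- A j i = 0
        have hij : (j : ℕ) ≠ 0 := by omega
        have hij2 : (j : ℕ) ≠ (i : ℕ) + 1 := by omega
        have hij3 : (i : ℕ) ≠ n - 1 := by
          have := j.isLt; omega
        simp only [hA, specialMatrix, Matrix.of_apply, dotProduct]
        rw [if_neg hij, if_neg hij2, if_neg hij3, zero_mul]
    · intro hj
      rw [hstep]
      rw [Matrix.mulVec, dotProduct]
      have hmn : m < n := by have := j.isLt; omega
      rw [Finset.sum_eq_single (⟨m, hmn⟩ : Fin n)]
      · have h1 : A j ⟨m, hmn⟩ = 1 := by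
          simp only [hA, specialMatrix, Matrix.of_apply]
          rw [if_neg (by omega), if_pos (by simpa using hj)]
        rw [h1, one_mul]
        exact (ih ⟨m, hmn⟩).2 rfl
      · intro i _ hi
        rcases lt_or_ge (m : ℕ) (i : ℕ) with h | h
        · rw [(ih i).1 h, mul_zero]
        · have him : (i : ℕ) < m := by
            rcases lt_or_eq_of_le h with h' | h'
            · exact h'
            · exact absurd (Fin.ext h') hi
          have hij : (j : ℕ) ≠ 0 := by omega
          have hij2 : (j : ℕ) ≠ (i : ℕ) + 1 := by omega
          have hij3 : (i : ℕ) ≠ n - 1 := by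
            have := j.isLt; omega
          simp only [hA, specialMatrix, Matrix.of_apply]
          rw [if_neg hij, if_neg hij2, if_neg hij3, zero_mul]
      · intro h; exact absurd (Finset.mem_univ _) h

/-- The minimal polynomial of the matrix `M(α; c)` equals its characteristic
polynomial. -/
theorem stmt_1 {F : Type*} [Field F] (n : ℕ) (hn : 1 ≤ n) (α c : Fin n → F) :
    minpoly F (specialMatrix n α c) = (specialMatrix n α c).charpoly := by
  classical
  set A := specialMatrix n α c with hA
  set e0 : Fin n → F := fun j : Fin n => if (j : ℕ) = 0 then (1:F) else 0 with he0
  have hdvd : minpoly F A ∣ A.charpoly := A.minpoly_dvd_charpoly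
  have hcmonic : A.charpoly.Monic := A.charpoly_monic
  have hmmonic : (minpoly F A).Monic := minpoly.monic A.isIntegral
  have hcdeg : A.charpoly.natDegree = n := by
    rw [Matrix.charpoly_natDegree_eq_dim, Fintype.card_fin]
  -- the matrix of iterated images of e0
  set B : Matrix (Fin n) (Fin n) F := Matrix.of (fun (k j : Fin n) => ((A ^ (k:ℕ)).mulVec e0) j)
    with hB
  have hBtri : ∀ k j : Fin n, (k : ℕ) < (j : ℕ) → B k j = 0 := fun k j h =>
    (specialMatrix_triangle n hn α c k j).1 h
  have hBdiag : ∀ k : Fin n, B k k = 1 := fun k =>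
    (specialMatrix_triangle n hn α c k k).2 rfl
  have hBdet : B.det = 1 := by
    rw [Matrix.det_of_lowerTriangular B (fun i j h => hBtri i j h)]
    simp [hBdiag]
  have hBunit : IsUnit B := by
    rw [Matrix.isUnit_iff_isUnit_det, hBdet]; exact isUnit_one
  -- degree lower bound
  have hdeg : n ≤ (minpoly F A).natDegree := by
    by_contra hlt
    push_neg at hlt
    set p := minpoly F A with hp
    set cv : Fin n → F := fun k => p.coeff k with hcv
    have haeval : Polynomial.aeval A p = 0 := minpoly.aeval F A
    have hsum : ∑ k : Fin n, p.coeff k • (A ^ (k:ℕ)) = 0 := by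
      rw [Fin.sum_univ_eq_sum_range (fun k => p.coeff k • (A ^ k))]
      rw [← Polynomial.aeval_eq_sum_range' hlt A]
      exact haeval
    have hvec : B.transpose.mulVec cv = 0 := by
      funext j
      have : (B.transpose.mulVec cv) j = ∑ k : Fin n, p.coeff k * ((A ^ (k:ℕ)).mulVec e0) j := by
        simp only [Matrix.mulVec, dotProduct, Matrix.transpose_apply, hB, Matrix.of_apply, hcv]
        exact Finset.sum_congr rfl (fun k _ => mul_comm _ _)
      rw [this]
      calc ∑ k : Fin n, p.coeff ↑k * (A ^ (k:ℕ)).mulVec e0 j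
          = ((∑ k : Fin n, p.coeff ↑k • A ^ (k:ℕ)).mulVec e0) j := by
            simp only [Matrix.mulVec, dotProduct, Finset.sum_apply, Matrix.sum_apply, Matrix.smul_apply,
              smul_eq_mul, Finset.mul_sum, Finset.sum_mul, mul_assoc]
            rw [Finset.sum_comm]
        _ = 0 := by rw [hsum, Matrix.zero_mulVec]; rfl
    have hcv0 : cv = 0 := by
      have hinj : Function.Injective (B.transpose.mulVec) :=
        Matrix.mulVec_injective_iff_isUnit.mpr ((Matrix.isUnit_transpose B).mpr hBunit)
      apply hinj
      rw [hvec, Matrix.mulVec_zero]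
    have : p.coeff p.natDegree = 0 := by
      have := congrFun hcv0 ⟨p.natDegree, hlt⟩
      simpa [hcv] using this
    rw [hmmonic.coeff_natDegree] at this
    exact one_ne_zero this
  exact Polynomial.eq_of_dvd_of_natDegree_le_of_leadingCoeff hdvd (by rw [hcdeg]; exact hdeg)
    (by rw [hmmonic.leadingCoeff, hcmonic.leadingCoeff])
end

section
/- Let F be a field, n ≥ 1, and let f = X^n + f_{n-1}X^{n-1} + ... + f_1 X + f_0 be a monic polynomial of degree n over F. For every tuple (c_1, ..., c_{n-1}) ∈ F^{n-1} there exists a tuple (α_0, α_1, ..., α_{n-1}) ∈ F^n such that the n×n matrix M whose first row is (-α_{n-1}, -α_{n-2}, ..., -α_1, -α_0), whose entries on the subdiagonal (positions (i+1, i) for 1 ≤ i ≤ n-1) are 1, whose last column has entry -c_i in row i+1 for 1 ≤ i ≤ n-1, and which is 0 elsewhere, is similar to the companion matrix C_{f_0, f_1, ..., f_{n-1}} of f. -/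
open Finset

private def uS {F : Type*} [Field F] (n : ℕ) (c g : ℕ → F) : ℕ → F
  | 0 => 1
  | m + 1 => c (n - (m + 1)) - ∑ j : Fin (m + 1), g (n - (m + 1) + j) * uS n c g j
termination_by m => m
decreasing_by exact j.isLt

private lemma uS_succ {F : Type*} [Field F] (n : ℕ) (c g : ℕ → F) (m : ℕ) :
    uS n c g (m + 1) =
      c (n - (m + 1)) - ∑ j ∈ Finset.range (m + 1), g (n - (m + 1) + j) * uS n c g j := by
  rw [uS]
  congr 1
  exact Fin.sum_univ_eq_sum_range (fun j => g (n - (m + 1) + j) * uS n c g j) (m + 1)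

private def bS {F : Type*} [Field F] (n : ℕ) (u g : ℕ → F) : ℕ → F
  | j => (if j = n - 1 then ∑ k ∈ Finset.range n, g k * u k else -u (j + 1))
      - ∑ k : Fin j, bS n u g k * u (j - k)
termination_by j => j
decreasing_by exact k.isLt

private lemma bS_def {F : Type*} [Field F] (n : ℕ) (u g : ℕ → F) (j : ℕ) :
    bS n u g j = (if j = n - 1 then ∑ k ∈ Finset.range n, g k * u k else -u (j + 1))
      - ∑ k ∈ Finset.range j, bS n u g k * u (j - k) := by
  rw [bS]
  congr 1
  exact Fin.sum_univ_eq_sum_range (fun k => bS n u g k * u (j - k)) j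

/-- The companion matrix `C_{c_0,...,c_{n-1}}`: entries `1` on the subdiagonal
(positions `(i+1, i)` for `1 ≤ i ≤ n-1`), last column `(-c_0, ..., -c_{n-1})ᵀ`,
and `0` elsewhere. -/
def companionMatrix {R : Type*} [Ring R] (n : ℕ) (c : Fin n → R) :
    Matrix (Fin n) (Fin n) R :=
  Matrix.of fun i j =>
    if (i : ℕ) = (j : ℕ) + 1 then 1
    else if (j : ℕ) = n - 1 then -c i
    else 0

/-- For every monic polynomial `f` of degree `n ≥ 1` and every tuple
`(c_1,...,c_{n-1})` there is a tuple `(α_0,...,α_{n-1})` such that the matrix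
`M(α; c)` is similar to the companion matrix of `f`. -/
theorem stmt_2 {F : Type*} [Field F] (n : ℕ) (hn : 1 ≤ n)
    (f : Polynomial F) (hmonic : f.Monic) (hdeg : f.natDegree = n)
    (c : Fin n → F) :
    ∃ α : Fin n → F, ∃ P : GL (Fin n) F,
      companionMatrix n (fun i => f.coeff i) =
        (P : Matrix (Fin n) (Fin n) F) * specialMatrix n α c *
          ((P⁻¹ : GL (Fin n) F) : Matrix (Fin n) (Fin n) F) := by
  classical
  set g : ℕ → F := fun k => f.coeff k with hg
  set cc : ℕ → F := fun k => if h : k < n then c ⟨k, h⟩ else 0 with hcc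
  set u : ℕ → F := uS n cc g with hu
  set b : ℕ → F := bS n u g with hb
  have hu0 : u 0 = 1 := by rw [hu, uS]
  set α : Fin n → F := fun i => b (n - 1 - (i : ℕ)) with hα
  set P : Matrix (Fin n) (Fin n) F :=
    Matrix.of (fun i j : Fin n => if (i : ℕ) ≤ (j : ℕ) then u ((j : ℕ) - (i : ℕ)) else 0)
    with hP
  have hPtri : P.BlockTriangular id := by
    intro i j hij
    simp only [hP, Matrix.of_apply]
    rw [if_neg]
    exact fun h => absurd h (by simpa using Nat.not_le.2 hij)
  have hPdet : P.det = 1 := by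
    rw [Matrix.det_of_upperTriangular hPtri]
    have : ∀ i : Fin n, P i i = 1 := by
      intro i; simp [hP, hu0]
    simp [this]
  have hPunit : IsUnit P.det := by rw [hPdet]; exact isUnit_one
  have hαrev : ∀ k : Fin n, α k.rev = b (k : ℕ) := by
    intro k
    simp only [hα, Fin.val_rev]
    congr 1
    have := k.isLt
    omega
  have hbsum : ∀ m : ℕ, ∑ k ∈ Finset.range (m + 1), b k * u (m - k)
      = if m = n - 1 then ∑ k ∈ Finset.range n, g k * u k else -u (m + 1) := by
    intro m
    rw [Finset.sum_range_succ, Nat.sub_self, hu0, mul_one]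
    have hd : b m = (if m = n - 1 then ∑ k ∈ Finset.range n, g k * u k else -u (m + 1))
        - ∑ k ∈ Finset.range m, b k * u (m - k) := bS_def n u g m
    rw [hd]
    ring
  have hgf : ∀ m : ℕ, g m = f.coeff m := fun m => rfl
  have hkey : specialMatrix n α c * P = P * companionMatrix n (fun i => f.coeff i) := by
    ext i j
    simp only [Matrix.mul_apply, specialMatrix, companionMatrix, hP, Matrix.of_apply]
    have hiLt := i.isLt
    have hjLt := j.isLt
    by_cases hi : (i : ℕ) = 0
    · -- row 0
      have hL : (∑ x : Fin n,
            (if (i:ℕ) = 0 then -α x.rev else if (i:ℕ) = (x:ℕ) + 1 then 1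
              else if (x:ℕ) = n - 1 then -c i else 0) *
            (if (x:ℕ) ≤ (j:ℕ) then u ((j:ℕ) - (x:ℕ)) else 0))
          = -∑ k ∈ Finset.range ((j:ℕ) + 1), b k * u ((j:ℕ) - k) := by
        have step : ∀ x : Fin n,
            (if (i:ℕ) = 0 then -α x.rev else if (i:ℕ) = (x:ℕ) + 1 then 1
              else if (x:ℕ) = n - 1 then -c i else 0) *
            (if (x:ℕ) ≤ (j:ℕ) then u ((j:ℕ) - (x:ℕ)) else 0)
            = (fun m : ℕ => -(b m * (if m ≤ (j:ℕ) then u ((j:ℕ) - m) else 0))) (x:ℕ) := by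
          intro x
          rw [if_pos hi, hαrev x]
          ring
        rw [Finset.sum_congr rfl (fun x _ => step x),
          Fin.sum_univ_eq_sum_range
            (fun m => -(b m * (if m ≤ (j:ℕ) then u ((j:ℕ) - m) else 0))) n,
          ← Finset.sum_subset (Finset.range_subset_range.2 (by omega : (j:ℕ) + 1 ≤ n))
            (fun x _ hx2 => by
              rw [if_neg (by simp only [Finset.mem_range] at hx2; omega)]
              ring)]
        rw [← Finset.sum_neg_distrib]
        apply Finset.sum_congr rfl
        intro x hx
        simp only [Finset.mem_range] at hx
        rw [if_pos (by omega)]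
      rw [hL]
      by_cases hj : (j : ℕ) = n - 1
      · -- entry (0, n-1)
        have hR : ∀ x : Fin n,
            (if (i:ℕ) ≤ (x:ℕ) then u ((x:ℕ) - (i:ℕ)) else 0) *
              (if (x:ℕ) = (j:ℕ) + 1 then 1 else if (j:ℕ) = n - 1 then -f.coeff (x:ℕ) else 0)
            = (fun m : ℕ => -(g m * u m)) (x:ℕ) := by
          intro x
          have hx := x.isLt
          rw [if_neg (show ¬((x:ℕ) = (j:ℕ) + 1) by omega), if_pos hj, if_pos (by omega),
            hi, Nat.sub_zero]
          simp only [← hgf]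
          ring
        rw [Finset.sum_congr rfl (fun x _ => hR x),
          Fin.sum_univ_eq_sum_range (fun m => -(g m * u m)) n]
        have hjj : (j:ℕ) + 1 = (n - 1) + 1 := by omega
        rw [hjj, hj, Finset.sum_neg_distrib, hbsum (n - 1), if_pos rfl]
      · -- entry (0, j) with j < n-1
        have hjlt : (j:ℕ) + 1 < n := by omega
        have hR : ∀ x : Fin n,
            (if (i:ℕ) ≤ (x:ℕ) then u ((x:ℕ) - (i:ℕ)) else 0) *
              (if (x:ℕ) = (j:ℕ) + 1 then 1 else if (j:ℕ) = n - 1 then -f.coeff (x:ℕ) else 0)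
            = if x = (⟨(j:ℕ) + 1, hjlt⟩ : Fin n) then
                (if (i:ℕ) ≤ (j:ℕ) + 1 then u ((j:ℕ) + 1 - (i:ℕ)) else 0) else 0 := by
          intro x
          by_cases hx : x = (⟨(j:ℕ) + 1, hjlt⟩ : Fin n)
          · rw [if_pos hx, hx]
            simp only [Fin.val_mk]
            rw [if_pos trivial, mul_one]
          · have hx' : ¬((x:ℕ) = (j:ℕ) + 1) := fun h => hx (Fin.ext h)
            rw [if_neg hx, if_neg hx', if_neg hj, mul_zero]
        rw [Finset.sum_congr rfl (fun x _ => hR x), Finset.sum_ite_eq' Finset.univ _ _,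
          if_pos (Finset.mem_univ _), hbsum (j:ℕ), if_neg hj, hi]
        simp
    · -- rows i ≥ 1
      have hL : (∑ x : Fin n,
            (if (i:ℕ) = 0 then -α x.rev else if (i:ℕ) = (x:ℕ) + 1 then 1
              else if (x:ℕ) = n - 1 then -c i else 0) *
            (if (x:ℕ) ≤ (j:ℕ) then u ((j:ℕ) - (x:ℕ)) else 0))
          = (if (i:ℕ) - 1 ≤ (j:ℕ) then u ((j:ℕ) - ((i:ℕ) - 1)) else 0)
            + (-c i) * (if n - 1 ≤ (j:ℕ) then u ((j:ℕ) - (n - 1)) else 0) := by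
        have hi1 : (i:ℕ) - 1 < n := by omega
        have hn1 : n - 1 < n := by omega
        have step : ∀ x : Fin n,
            (if (i:ℕ) = 0 then -α x.rev else if (i:ℕ) = (x:ℕ) + 1 then 1
              else if (x:ℕ) = n - 1 then -c i else 0) *
            (if (x:ℕ) ≤ (j:ℕ) then u ((j:ℕ) - (x:ℕ)) else 0)
            = (if x = (⟨(i:ℕ) - 1, hi1⟩ : Fin n) then
                (if (i:ℕ) - 1 ≤ (j:ℕ) then u ((j:ℕ) - ((i:ℕ) - 1)) else 0) else 0)
              + (if x = (⟨n - 1, hn1⟩ : Fin n) then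
                (-c i) * (if n - 1 ≤ (j:ℕ) then u ((j:ℕ) - (n - 1)) else 0) else 0) := by
          intro x
          rw [if_neg hi]
          by_cases hx1 : x = (⟨(i:ℕ) - 1, hi1⟩ : Fin n)
          · have hv : (x:ℕ) = (i:ℕ) - 1 := by rw [hx1]
            have hne : ¬(x = (⟨n - 1, hn1⟩ : Fin n)) := by
              intro h
              apply hi
              have := congrArg Fin.val h
              simp only [] at this
              omega
            rw [if_pos hx1, if_neg hne, if_pos (by omega : (i:ℕ) = (x:ℕ) + 1), hv]
            ring
          · have hv : ¬((x:ℕ) = (i:ℕ) - 1) := fun h => hx1 (Fin.ext h)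
            rw [if_neg hx1, if_neg (by omega : ¬((i:ℕ) = (x:ℕ) + 1))]
            by_cases hx2 : x = (⟨n - 1, hn1⟩ : Fin n)
            · have hv2 : (x:ℕ) = n - 1 := by rw [hx2]
              rw [if_pos hx2, if_pos hv2, hv2]
              ring
            · have hv2 : ¬((x:ℕ) = n - 1) := fun h => hx2 (Fin.ext h)
              rw [if_neg hx2, if_neg hv2]
              ring
        rw [Finset.sum_congr rfl (fun x _ => step x), Finset.sum_add_distrib,
          Finset.sum_ite_eq' Finset.univ _ _, Finset.sum_ite_eq' Finset.univ _ _,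
          if_pos (Finset.mem_univ _), if_pos (Finset.mem_univ _)]
      rw [hL]
      by_cases hj : (j : ℕ) = n - 1
      · -- entry (i, n-1), i ≥ 1
        have hR : ∀ x : Fin n,
            (if (i:ℕ) ≤ (x:ℕ) then u ((x:ℕ) - (i:ℕ)) else 0) *
              (if (x:ℕ) = (j:ℕ) + 1 then 1 else if (j:ℕ) = n - 1 then -f.coeff (x:ℕ) else 0)
            = (fun m : ℕ => (if (i:ℕ) ≤ m then u (m - (i:ℕ)) else 0) * (-g m)) (x:ℕ) := by
          intro x
          have hx := x.isLt
          rw [if_neg (show ¬((x:ℕ) = (j:ℕ) + 1) by omega), if_pos hj]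
        rw [Finset.sum_congr rfl (fun x _ => hR x),
          Fin.sum_univ_eq_sum_range
            (fun m => (if (i:ℕ) ≤ m then u (m - (i:ℕ)) else 0) * (-g m)) n,
          Finset.range_eq_Ico,
          ← Finset.sum_subset (Finset.Ico_subset_Ico_left (Nat.zero_le (i:ℕ)))
            (fun x hx hx2 => by
              simp only [Finset.mem_Ico] at hx hx2
              rw [if_neg (by omega)]
              ring),
          Finset.sum_Ico_eq_sum_range]
        have hnu : u (n - (i:ℕ)) = c i - ∑ t ∈ Finset.range (n - (i:ℕ)), g ((i:ℕ) + t) * u t := by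
          obtain ⟨m, hm⟩ : ∃ m, n - (i:ℕ) = m + 1 := ⟨n - (i:ℕ) - 1, by omega⟩
          have h2 := uS_succ n cc g m
          rw [← hu] at h2
          have h3 : n - (m + 1) = (i:ℕ) := by omega
          have h4 : cc (i:ℕ) = c i := by
            simp only [hcc]
            rw [dif_pos hiLt]
          rw [hm, h2, h3, h4]
        have he1 : (j:ℕ) - ((i:ℕ) - 1) = n - (i:ℕ) := by omega
        have he2 : (j:ℕ) - (n - 1) = 0 := by omega
        rw [if_pos (by omega : (i:ℕ) - 1 ≤ (j:ℕ)), if_pos (by omega : n - 1 ≤ (j:ℕ)),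
          he1, he2, hu0, hnu]
        have hterm : ∀ t ∈ Finset.range (n - (i:ℕ)),
            (fun m => (if (i:ℕ) ≤ m then u (m - (i:ℕ)) else 0) * (-g m)) ((i:ℕ) + t)
              = -(g ((i:ℕ) + t) * u t) := by
          intro t _
          simp only []
          rw [if_pos (Nat.le_add_right _ _), Nat.add_sub_cancel_left]
          ring
        rw [Finset.sum_congr rfl hterm, Finset.sum_neg_distrib]
        ring
      · -- entry (i, j), i ≥ 1, j < n-1
        have hjlt : (j:ℕ) + 1 < n := by omega
        have hR : ∀ x : Fin n,
            (if (i:ℕ) ≤ (x:ℕ) then u ((x:ℕ) - (i:ℕ)) else 0) *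
              (if (x:ℕ) = (j:ℕ) + 1 then 1 else if (j:ℕ) = n - 1 then -f.coeff (x:ℕ) else 0)
            = if x = (⟨(j:ℕ) + 1, hjlt⟩ : Fin n) then
                (if (i:ℕ) ≤ (j:ℕ) + 1 then u ((j:ℕ) + 1 - (i:ℕ)) else 0) else 0 := by
          intro x
          by_cases hx : x = (⟨(j:ℕ) + 1, hjlt⟩ : Fin n)
          · rw [if_pos hx, hx]
            simp only [Fin.val_mk]
            rw [if_pos trivial, mul_one]
          · have hx' : ¬((x:ℕ) = (j:ℕ) + 1) := fun h => hx (Fin.ext h)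
            rw [if_neg hx, if_neg hx', if_neg hj, mul_zero]
        rw [Finset.sum_congr rfl (fun x _ => hR x), Finset.sum_ite_eq' Finset.univ _ _,
          if_pos (Finset.mem_univ _),
          if_neg (by omega : ¬(n - 1 ≤ (j:ℕ))), mul_zero, add_zero]
        by_cases hij : (i:ℕ) - 1 ≤ (j:ℕ)
        · rw [if_pos hij, if_pos (by omega : (i:ℕ) ≤ (j:ℕ) + 1)]
          congr 1
          omega
        · rw [if_neg hij, if_neg (by omega : ¬((i:ℕ) ≤ (j:ℕ) + 1))]
  refine ⟨α, (Matrix.nonsingInvUnit P hPunit)⁻¹, ?_⟩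
  have h1 : (((Matrix.nonsingInvUnit P hPunit)⁻¹ : GL (Fin n) F) :
      Matrix (Fin n) (Fin n) F) = P⁻¹ := rfl
  have h2 : ((((Matrix.nonsingInvUnit P hPunit)⁻¹ : GL (Fin n) F)⁻¹ : GL (Fin n) F) :
      Matrix (Fin n) (Fin n) F) = P := by
    rw [inv_inv]; rfl
  rw [h1, h2, mul_assoc, hkey, ← mul_assoc, Matrix.nonsing_inv_mul P hPunit, one_mul]
end

section
/- Let F be a field and let A ∈ M_n(F) be a nil-clean matrix. Then there exists a non-negative integer k with 0 ≤ k ≤ n such that the trace of A equals k·1, where k·1 denotes the image of the integer k in F. -/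
/-- An element of a ring is *nil-clean* if it is the sum of an idempotent
and a nilpotent element. -/
def IsNilClean {R : Type*} [Ring R] (a : R) : Prop :=
  ∃ e n : R, e ^ 2 = e ∧ IsNilpotent n ∧ a = e + n

open Module

theorem Matrix.trace_eq_finrank_range_toLin'_of_isIdempotentElem {K m : Type*} [Field K]
    [Fintype m] [DecidableEq m] {E : Matrix m m K} (hE : IsIdempotentElem E) :
    E.trace = finrank K (LinearMap.range E.toLin') := by
  have hE' : IsIdempotentElem E.toLin' := hE.map Matrix.toLinAlgEquiv'
  rw [← trace_toLin'_eq, (LinearMap.IsIdempotentElem.isProj_range _ hE').trace]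

theorem Matrix.exists_le_card_trace_eq_natCast_of_isNilClean {K m : Type*} [Field K]
    [Fintype m] [DecidableEq m] {A : Matrix m m K} (hA : IsNilClean A) :
    ∃ k ≤ Fintype.card m, A.trace = k := by
  obtain ⟨E, N, hE, hN, rfl⟩ := hA
  refine ⟨finrank K (LinearMap.range E.toLin'), ?_, ?_⟩
  · simpa using Submodule.finrank_le (LinearMap.range E.toLin')
  · rw [trace_add, trace_eq_finrank_range_toLin'_of_isIdempotentElem ((sq E).symm.trans hE),
      (isNilpotent_trace_of_isNilpotent hN).eq_zero, add_zero]

/-- The trace of a nil-clean matrix is of the form `k·1` for some `0 ≤ k ≤ n`. -/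
theorem stmt_4 {F : Type*} [Field F] {n : ℕ} (A : Matrix (Fin n) (Fin n) F)
    (hA : IsNilClean A) :
    ∃ k : ℕ, k ≤ n ∧ A.trace = (k : F) := by
  simpa using A.exists_le_card_trace_eq_natCast_of_isNilClean hA
end

section
/- Let F be a field of characteristic 0 and let A ∈ M_n(F) be a nil-clean matrix. Then A is nilpotent if and only if the trace of A equals 0. -/
namespace Matrix

variable {ι F : Type*} [Fintype ι] [DecidableEq ι] [Field F]

theorem IsIdempotentElem.eq_zero_of_trace_eq_zero [CharZero F] {E : Matrix ι ι F}
    (hE : IsIdempotentElem E) (htr : E.trace = 0) : E = 0 := by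
  have hlin : IsIdempotentElem (toLin' E) := hE.map toLinAlgEquiv'
  rw [← trace_toLin'_eq] at htr
  exact toLin'.injective <| by
    rw [LinearMap.IsIdempotentElem.eq_zero_of_trace_eq_zero hlin htr, map_zero]

theorem trace_eq_zero_of_isNilpotent {N : Matrix ι ι F} (hN : IsNilpotent N) : N.trace = 0 :=
  (isNilpotent_trace_of_isNilpotent hN).eq_zero

theorem isNilpotent_of_isNilClean_of_trace_eq_zero [CharZero F] {A : Matrix ι ι F}
    (hA : IsNilClean A) (htr : A.trace = 0) : IsNilpotent A := by
  obtain ⟨E, N, hE, hN, rfl⟩ := hA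
  have hEtr : E.trace = 0 := by
    rwa [trace_add, trace_eq_zero_of_isNilpotent hN, add_zero] at htr
  have hE0 : E = 0 :=
    IsIdempotentElem.eq_zero_of_trace_eq_zero (by rwa [IsIdempotentElem, ← sq]) hEtr
  rwa [hE0, zero_add]

end Matrix

/-- Over a field of characteristic `0`, a nil-clean matrix is nilpotent iff its
trace is `0`. -/
theorem stmt_6 {F : Type*} [Field F] [CharZero F] {n : ℕ}
    (A : Matrix (Fin n) (Fin n) F) (hA : IsNilClean A) :
    IsNilpotent A ↔ A.trace = 0 :=
  ⟨Matrix.trace_eq_zero_of_isNilpotent, Matrix.isNilpotent_of_isNilClean_of_trace_eq_zero hA⟩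
end

section
/- Let F be a field of prime characteristic p and let A ∈ M_n(F) be a nil-clean matrix. Then there exists an integer k ∈ {1, ..., p} such that the trace of A equals k·1 (k·1 denoting the image of k in F) and either k ≤ n or k = p. -/
theorem Matrix.trace_eq_rank_of_isIdempotentElem {K m : Type*} [Field K] [Fintype m]
    [DecidableEq m] {e : Matrix m m K} (he : IsIdempotentElem e) :
    e.trace = e.rank := by
  rw [← Matrix.trace_toLin'_eq]
  exact (LinearMap.IsIdempotentElem.isProj_range _ (he.map Matrix.toLinAlgEquiv')).trace

theorem IsNilClean.exists_le_card_trace_eq {K m : Type*} [Field K] [Fintype m]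
    [DecidableEq m] {A : Matrix m m K} (hA : IsNilClean A) :
    ∃ r ≤ Fintype.card m, A.trace = r := by
  obtain ⟨E, N, hE, hN, rfl⟩ := hA
  refine ⟨E.rank, E.rank_le_card_width, ?_⟩
  rw [Matrix.trace_add, (Matrix.isNilpotent_trace_of_isNilpotent hN).eq_zero, add_zero,
    Matrix.trace_eq_rank_of_isIdempotentElem (by rwa [IsIdempotentElem, ← sq])]

theorem CharP.exists_natCast_eq (R : Type*) [AddGroupWithOne R] {p : ℕ} [CharP R p]
    (hp : 0 < p) (r : ℕ) : ∃ k, 1 ≤ k ∧ k ≤ p ∧ (r : R) = k ∧ (k ≤ r ∨ k = p) := by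
  by_cases hdvd : p ∣ r
  · exact ⟨p, hp, le_rfl, by simp [(CharP.cast_eq_zero_iff R p r).mpr hdvd], Or.inr rfl⟩
  · exact ⟨r % p, Nat.pos_of_ne_zero fun h => hdvd (Nat.dvd_of_mod_eq_zero h),
      (Nat.mod_lt r hp).le, CharP.natCast_eq_natCast_mod R p r, Or.inl (Nat.mod_le r p)⟩

/-- Over a field of prime characteristic `p`, the trace of a nil-clean `n × n`
matrix is `k·1` for some `k ∈ {1, ..., p}` with `k ≤ n` or `k = p`. -/
theorem stmt_8 {F : Type*} [Field F] {p : ℕ} (hp : p.Prime) [CharP F p] {n : ℕ}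
    (A : Matrix (Fin n) (Fin n) F) (hA : IsNilClean A) :
    ∃ k : ℕ, 1 ≤ k ∧ k ≤ p ∧ A.trace = (k : F) ∧ (k ≤ n ∨ k = p) := by
  obtain ⟨r, hrn, htr⟩ := hA.exists_le_card_trace_eq
  obtain ⟨k, hk1, hkp, hrk, hk⟩ := CharP.exists_natCast_eq F hp.pos r
  rw [Fintype.card_fin] at hrn
  exact ⟨k, hk1, hkp, htr.trans hrk, hk.imp_left (·.trans hrn)⟩
end

section
/- Let F be a field of prime characteristic p, let n < p, and let A ∈ M_n(F) be a nil-clean matrix with trace equal to 0. Then A is nilpotent. -/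
open Module

theorem LinearMap.IsIdempotentElem.eq_zero_of_trace_eq_zero_of_finrank_lt
    {K V : Type*} [Field K] [AddCommGroup V] [Module K V] [FiniteDimensional K V]
    {p : ℕ} [CharP K p] (hV : finrank K V < p) {e : V →ₗ[K] V} (he : IsIdempotentElem e)
    (htr : LinearMap.trace K V e = 0) : e = 0 := by
  rw [(LinearMap.IsIdempotentElem.isProj_range e he).trace, CharP.cast_eq_zero_iff K p] at htr
  have hrange_lt : finrank K (LinearMap.range e) < p :=
    (Submodule.finrank_le _).trans_lt hV
  have hrange : finrank K (LinearMap.range e) = 0 := Nat.eq_zero_of_dvd_of_lt htr hrange_lt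
  rwa [Submodule.finrank_eq_zero, LinearMap.range_eq_bot] at hrange

theorem Matrix.eq_zero_of_isIdempotentElem_of_trace_eq_zero
    {K ι : Type*} [Field K] [Fintype ι] [DecidableEq ι] {p : ℕ} [CharP K p]
    (hι : Fintype.card ι < p) {E : Matrix ι ι K} (hE : IsIdempotentElem E)
    (htr : E.trace = 0) : E = 0 := by
  have hE' : IsIdempotentElem E.toLin' := by
    change E.toLin' ∘ₗ E.toLin' = E.toLin'
    rw [← Matrix.toLin'_mul, hE.eq]
  have hzero : E.toLin' = 0 :=
    LinearMap.IsIdempotentElem.eq_zero_of_trace_eq_zero_of_finrank_lt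
      (by rwa [finrank_fintype_fun_eq_card]) hE' (by rwa [Matrix.trace_toLin'_eq])
  simpa using hzero

theorem stmt_9_general {F : Type*} [Field F] {p : ℕ} [CharP F p] {n : ℕ}
    (hnp : n < p) (A : Matrix (Fin n) (Fin n) F) (hA : IsNilClean A)
    (htr : A.trace = 0) :
    IsNilpotent A := by
  obtain ⟨E, N, hE, hN, rfl⟩ := hA
  have htrN : N.trace = 0 := (Matrix.isNilpotent_trace_of_isNilpotent hN).eq_zero
  have htrE : E.trace = 0 := by rwa [Matrix.trace_add, htrN, add_zero] at htr
  have hE0 : E = 0 :=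
    Matrix.eq_zero_of_isIdempotentElem_of_trace_eq_zero (by simpa using hnp)
      (by rwa [IsIdempotentElem, ← sq]) htrE
  rwa [hE0, zero_add]

/-- Over a field of prime characteristic `p`, with `n < p`, a nil-clean `n × n`
matrix of trace `0` is nilpotent. -/
theorem stmt_9 {F : Type*} [Field F] {p : ℕ} (hp : p.Prime) [CharP F p] {n : ℕ}
    (hnp : n < p) (A : Matrix (Fin n) (Fin n) F) (hA : IsNilClean A)
    (htr : A.trace = 0) :
    IsNilpotent A :=
  stmt_9_general hnp A hA htr
end

section
/- Let F be a field of prime characteristic p, let 0 < n < p, and let A ∈ M_n(F) be a nil-clean matrix whose trace equals n·1, where n·1 denotes the image of the integer n in F. Then A is unipotent. -/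
/-!
Write `A = E + N` with `E` idempotent and `N` nilpotent. Since `N` has trace zero, the trace of
`E` is `n·1`; but the trace of an idempotent is its rank, read in `F`, and ranks are at most
`n < p`, where casting `ℕ → F` is injective. So `E` has full rank, and a full-rank idempotent is
the identity. Hence `A - 1 = N`.
-/

open Module

theorem LinearMap.eq_one_of_isIdempotentElem_of_trace_eq_finrank {K V : Type*} [Field K]
    [AddCommGroup V] [Module K V] [FiniteDimensional K V] {p : ℕ} [CharP K p]
    (hV : finrank K V < p) {e : V →ₗ[K] V} (he : IsIdempotentElem e)
    (htr : trace K V e = finrank K V) : e = 1 := by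
  have hrange : finrank K (range e) = finrank K V := by
    refine CharP.natCast_injOn_Iio K p ((Submodule.finrank_le _).trans_lt hV) hV ?_
    rw [← ((isProj_range_iff_isIdempotentElem e).mpr he).trace, htr]
  have hunit : IsUnit e := by
    rw [isUnit_iff_range_eq_top]
    exact Submodule.eq_top_of_finrank_eq hrange
  exact (IsIdempotentElem.iff_eq_one_of_isUnit hunit).mp he

theorem Matrix.eq_one_of_isIdempotentElem_of_trace_eq_card {K ι : Type*} [Field K] [Fintype ι]
    [DecidableEq ι] {p : ℕ} [CharP K p] (hι : Fintype.card ι < p) {E : Matrix ι ι K}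
    (hE : IsIdempotentElem E) (htr : E.trace = Fintype.card ι) : E = 1 := by
  apply toLinAlgEquiv'.injective
  rw [map_one]
  refine LinearMap.eq_one_of_isIdempotentElem_of_trace_eq_finrank (p := p) ?_
    (hE.map toLinAlgEquiv') ?_
  · rwa [finrank_fintype_fun_eq_card]
  · rw [finrank_fintype_fun_eq_card]
    exact (trace_toLin'_eq E).trans htr

theorem IsNilClean.isNilpotent_sub_one_of_trace_eq_card {K ι : Type*} [Field K] [Fintype ι]
    [DecidableEq ι] {p : ℕ} [CharP K p] (hι : Fintype.card ι < p) {A : Matrix ι ι K}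
    (hA : IsNilClean A) (htr : A.trace = Fintype.card ι) : IsNilpotent (A - 1) := by
  obtain ⟨E, N, hE, hN, rfl⟩ := hA
  have htrN : N.trace = 0 := (Matrix.isNilpotent_trace_of_isNilpotent hN).eq_zero
  have hE1 : E = 1 := by
    refine Matrix.eq_one_of_isIdempotentElem_of_trace_eq_card hι ((sq E).symm.trans hE) ?_
    rwa [Matrix.trace_add, htrN, add_zero] at htr
  simpa [hE1] using hN

theorem stmt_10_general {F : Type*} [Field F] {p : ℕ} [CharP F p] {n : ℕ}
    (hnp : n < p) (A : Matrix (Fin n) (Fin n) F)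
    (hA : IsNilClean A) (htr : A.trace = (n : F)) :
    IsNilpotent (A - 1) :=
  hA.isNilpotent_sub_one_of_trace_eq_card (by simpa using hnp) (by simpa using htr)

/-- Over a field of prime characteristic `p`, with `0 < n < p`, a nil-clean
`n × n` matrix of trace `n·1` is unipotent. -/
theorem stmt_10 {F : Type*} [Field F] {p : ℕ} (hp : p.Prime) [CharP F p] {n : ℕ}
    (h0 : 0 < n) (hnp : n < p) (A : Matrix (Fin n) (Fin n) F)
    (hA : IsNilClean A) (htr : A.trace = (n : F)) :
    IsNilpotent (A - 1) :=
  stmt_10_general hnp A hA htr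
end

section
/- Let F be a field of prime characteristic p and let A ∈ M_p(F) (i.e., n = p) be a nil-clean matrix whose trace equals 0. Then A is unipotent or nilpotent. -/
theorem Nat.eq_zero_or_eq_of_dvd_of_le {p r : ℕ} (hdvd : p ∣ r) (hle : r ≤ p) :
    r = 0 ∨ r = p := by
  rcases r.eq_zero_or_pos with h | h
  · exact .inl h
  · exact .inr (hle.antisymm (Nat.le_of_dvd h hdvd))

theorem LinearMap.IsIdempotentElem.eq_zero_or_eq_one_of_trace_eq_zero {K V : Type*} [Field K]
    [AddCommGroup V] [Module K V] [FiniteDimensional K V] {p : ℕ} [CharP K p]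
    (hV : Module.finrank K V = p) {f : V →ₗ[K] V} (hf : IsIdempotentElem f)
    (htr : LinearMap.trace K V f = 0) : f = 0 ∨ f = 1 := by
  have hdvd : p ∣ Module.finrank K (LinearMap.range f) := by
    rwa [(f.isProj_range_iff_isIdempotentElem.mpr hf).trace, CharP.cast_eq_zero_iff K p] at htr
  rcases Nat.eq_zero_or_eq_of_dvd_of_le hdvd (hV ▸ Submodule.finrank_le _) with h | h
  · exact .inl (LinearMap.range_eq_bot.mp (Submodule.finrank_eq_zero.mp h))
  · have hsurj : LinearMap.range f = ⊤ := Submodule.eq_top_of_finrank_eq (h.trans hV.symm)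
    exact .inr ((IsIdempotentElem.iff_eq_one_of_isUnit
      ((LinearMap.isUnit_iff_range_eq_top f).mpr hsurj)).mp hf)

theorem Matrix.eq_zero_or_eq_one_of_isIdempotentElem_of_trace_eq_zero {K n : Type*} [Field K]
    [Fintype n] [DecidableEq n] {p : ℕ} [CharP K p] (hn : Fintype.card n = p)
    {E : Matrix n n K} (hE : IsIdempotentElem E) (htr : E.trace = 0) : E = 0 ∨ E = 1 := by
  simpa only [map_eq_zero_iff _ (AlgEquiv.injective _), map_eq_one_iff _ (AlgEquiv.injective _)]
    using LinearMap.IsIdempotentElem.eq_zero_or_eq_one_of_trace_eq_zero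
      ((Module.finrank_fintype_fun_eq_card K).trans hn) (hE.map toLinAlgEquiv')
      ((trace_toLin'_eq E).trans htr)

theorem stmt_11_general {F : Type*} [Field F] {p : ℕ} [CharP F p]
    (A : Matrix (Fin p) (Fin p) F) (hA : IsNilClean A) (htr : A.trace = 0) :
    IsNilpotent (A - 1) ∨ IsNilpotent A := by
  obtain ⟨E, N, hE, hN, rfl⟩ := hA
  have htrE : E.trace = 0 := by
    rwa [Matrix.trace_add, (Matrix.isNilpotent_trace_of_isNilpotent hN).eq_zero, add_zero] at htr
  rcases Matrix.eq_zero_or_eq_one_of_isIdempotentElem_of_trace_eq_zero (Fintype.card_fin p)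
    (by rwa [IsIdempotentElem, ← sq]) htrE with rfl | rfl
  · exact .inr (by simpa using hN)
  · exact .inl (by simpa using hN)

/-- Over a field of prime characteristic `p`, a nil-clean `p × p` matrix of
trace `0` is unipotent or nilpotent. -/
theorem stmt_11 {F : Type*} [Field F] {p : ℕ} (hp : p.Prime) [CharP F p]
    (A : Matrix (Fin p) (Fin p) F) (hA : IsNilClean A) (htr : A.trace = 0) :
    IsNilpotent (A - 1) ∨ IsNilpotent A :=
  stmt_11_general A hA htr
end

section
/- Let p be a prime and n ≥ 3 an integer with p < n. Then for every companion matrix C ∈ M_n(F_p) over the field F_p with p elements and for every polynomial g ∈ F_p[X] of degree at most n−2, there exist matrices E, M ∈ M_n(F_p) such that C = E + M, E is idempotent (E² = E), and the characteristic polynomial of M equals X^n + g. -/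
/-!
An idempotent of rank `r` has trace `r`, so comparing traces in `C = E + M` forces
`r ≡ -c_{n-1} (mod p)`; we take `r ∈ {1, …, p}`, hence `1 ≤ r < n`. Identify `R^n` with the
polynomials of degree `< n` (that is, with `R[X]/(f)`, where `C` acts as multiplication by `X`).
It suffices to find monic polynomials `P_0, …, P_{n-1}` with `deg P_k = k` and
`P_k = (X - 1)^k` for `k ≤ r` such that `X P_k - P_{k+1}` (for `k + 1 < n`) and
`X P_{n-1} + ∑ h_j P_j - f` all have degree `< r`, where `h = X^n + g`. Then the matrix `M`
sending `P_k ↦ P_{k+1}` and `P_{n-1} ↦ -∑ h_j P_j` is conjugate to the companion matrix of `h`,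
and `E = C - M` maps everything into `span(P_0, …, P_{r-1}) = R[X]_{<r}`, on which it is the
identity; so `E` is idempotent.

The `P_k` come from one division. With `N = n - 1 - r`, `T = h /ₘ X^r` and
`Y = X^N (f - ∑_{j<r} h_j (X - 1)^j) /ₘ T`, put `P_{r+s} = X^s Y /ₘ X^N` for `s ≥ 1`, so that
`X^N P_k ≡ X^{k-r} Y` up to degree `< n - 2`. The trace condition is exactly what makes
`Y ≡ X^N (X - 1)^r` up to the same degree, so that `P_r = (X - 1)^r` fits into this pattern.
-/

open Polynomial Matrix Finset

namespace Polynomial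

section Semiring

variable {R : Type*} [Semiring R]

theorem natDegree_X_pow_add_of_degree_lt [Nontrivial R] {p : R[X]} {n : ℕ} (hp : p.degree < n) :
    (X ^ n + p).natDegree = n := by
  rw [natDegree_add_eq_left_of_degree_lt (by rwa [degree_X_pow]), natDegree_X_pow]

theorem Monic.degree_mul_lt_iff [Nontrivial R] {p q : R[X]} (hq : q.Monic) {d : ℕ} :
    (q * p).degree < ↑(q.natDegree + d) ↔ p.degree < d := by
  by_cases hp : p = 0
  · simp [hp]
  rw [hq.degree_mul_comm, hq.degree_mul, degree_eq_natDegree hq.ne_zero, degree_eq_natDegree hp]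
  norm_cast
  omega

theorem exists_monic_natDegree_coeff_eq [Nontrivial R] {n : ℕ} (c : Fin n → R) :
    ∃ f : R[X], f.Monic ∧ f.natDegree = n ∧ ∀ i : Fin n, f.coeff i = c i :=
  ⟨X ^ n + ∑ i : Fin n, C (c i) * X ^ (i : ℕ), monic_X_pow_add (degree_sum_fin_lt c),
    natDegree_X_pow_add_of_degree_lt (degree_sum_fin_lt c),
    fun i => by simp [coeff_X_pow, finsetSum_coeff, i.isLt.ne, Fin.val_inj]⟩

theorem degree_sum_C_mul_lt {ι : Type*} (s : Finset ι) (a : ι → R) (p : ι → R[X]) {d : ℕ}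
    (hp : ∀ i ∈ s, (p i).degree < d) : (∑ i ∈ s, C (a i) * p i).degree < d := by
  simp only [← mem_degreeLT, ← smul_eq_C_mul] at hp ⊢
  exact Submodule.sum_mem _ fun i hi => Submodule.smul_mem _ _ (hp i hi)

theorem degree_sum_C_mul_X_pow_lt (a : ℕ → R) (d : ℕ) :
    (∑ s ∈ range d, C (a s) * X ^ s).degree < (d : WithBot ℕ) :=
  degree_sum_C_mul_lt _ _ _ fun s hs =>
    (degree_X_pow_le s).trans_lt (by exact_mod_cast mem_range.1 hs)

end Semiring

section Ring

variable {R : Type*} [Ring R]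

theorem natDegree_X_sub_C_pow [Nontrivial R] (a : R) (j : ℕ) :
    ((X - C a) ^ j).natDegree = j := by
  rw [(monic_X_sub_C a).natDegree_pow, natDegree_X_sub_C, mul_one]

theorem degree_sub_lt_of_nextCoeff_eq {p q : R[X]} (hp : p.Monic) (hq : q.Monic)
    (hpq : p.natDegree = q.natDegree) (hnext : p.nextCoeff = q.nextCoeff) :
    (p - q).degree < ↑(p.natDegree - 1) := by
  rw [degree_lt_iff_coeff_zero]
  intro m hm
  rw [coeff_sub, sub_eq_zero]
  rcases lt_trichotomy m p.natDegree with hlt | rfl | hgt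
  · rwa [nextCoeff_of_natDegree_pos (by omega), nextCoeff_of_natDegree_pos (by omega), ← hpq,
      show p.natDegree - 1 = m by omega] at hnext
  · rw [hp.coeff_natDegree, hpq, hq.coeff_natDegree]
  · rw [coeff_eq_zero_of_natDegree_lt hgt, coeff_eq_zero_of_natDegree_lt (hpq ▸ hgt)]

end Ring

end Polynomial

namespace CompanionMatrix

variable {R : Type*} [CommRing R] {n : ℕ}

def coeffMatrix (n : ℕ) (P : ℕ → R[X]) : Matrix (Fin n) (Fin n) R :=
  of fun i k => (P k).coeff i

lemma coeffMatrix_add (P Q : ℕ → R[X]) :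
    coeffMatrix n (fun k => P k + Q k) = coeffMatrix n P + coeffMatrix n Q := by
  ext; simp [coeffMatrix]

lemma coeffMatrix_sub (P Q : ℕ → R[X]) :
    coeffMatrix n (fun k => P k - Q k) = coeffMatrix n P - coeffMatrix n Q := by
  ext; simp [coeffMatrix]

lemma coeffMatrix_congr {P Q : ℕ → R[X]} (h : ∀ k < n, P k = Q k) :
    coeffMatrix n P = coeffMatrix n Q := by
  ext i k; simp [coeffMatrix, h k k.isLt]

lemma blockTriangular_coeffMatrix {P : ℕ → R[X]} (hP : ∀ k < n, (P k).natDegree ≤ k) :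
    (coeffMatrix n P).BlockTriangular id := fun _ k hki =>
  coeff_eq_zero_of_natDegree_lt ((hP k k.isLt).trans_lt hki)

lemma det_coeffMatrix {P : ℕ → R[X]} (hP : ∀ k < n, (P k).Monic ∧ (P k).natDegree = k) :
    (coeffMatrix n P).det = 1 := by
  rw [det_of_isUpperTriangular (blockTriangular_coeffMatrix fun k hk => (hP k hk).2.le)]
  refine prod_eq_one fun i _ => ?_
  simpa [coeffMatrix, (hP i i.isLt).2] using (hP i i.isLt).1.coeff_natDegree

lemma companionMatrix_apply (c : Fin n → R) (i j : Fin n) :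
    companionMatrix n c i j =
      (if (i : ℕ) = j + 1 then 1 else 0) + (if (j : ℕ) = n - 1 then -c i else 0) := by
  have := i.isLt
  have := j.isLt
  simp only [companionMatrix, of_apply]
  split_ifs <;> first | omega | simp

lemma companionMatrix_mul_coeffMatrix (f : R[X]) (P : ℕ → R[X]) :
    companionMatrix n (fun i => f.coeff i) * coeffMatrix n P =
      coeffMatrix n fun k => X * P k - C ((P k).coeff (n - 1)) * f := by
  ext ⟨i, hi⟩ k
  simp only [mul_apply, companionMatrix_apply, coeffMatrix, of_apply, add_mul, sum_add_distrib,
    ite_mul, one_mul, zero_mul, coeff_sub, coeff_C_mul]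
  rw [Fin.sum_univ_eq_sum_range (fun j => if i = j + 1 then (P k).coeff j else 0),
    Fin.sum_univ_eq_sum_range (fun j => if j = n - 1 then -f.coeff i * (P k).coeff j else 0),
    sum_ite_eq' _ _ (fun j => -f.coeff i * (P k).coeff j), if_pos (mem_range.2 (by omega))]
  cases i with
  | zero => simp [mul_comm]
  | succ i =>
    simp only [Nat.add_right_cancel_iff, sum_ite_eq, mem_range, show i < n by omega, ↓reduceIte,
      neg_mul, coeff_X_mul, eq_comm]
    ring

lemma coeffMatrix_mul_companionMatrix (h : R[X]) (P : ℕ → R[X]) :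
    coeffMatrix n P * companionMatrix n (fun i => h.coeff i) =
      coeffMatrix n fun k =>
        if k + 1 < n then P (k + 1) else -∑ j ∈ range n, C (h.coeff j) * P j := by
  ext i ⟨k, hk⟩
  simp only [mul_apply, companionMatrix_apply, coeffMatrix, of_apply, mul_add, sum_add_distrib,
    mul_ite, mul_one, mul_zero]
  rw [Fin.sum_univ_eq_sum_range (fun j => if j = k + 1 then (P j).coeff i else 0),
    Fin.sum_univ_eq_sum_range (fun j => if k = n - 1 then (P j).coeff i * -h.coeff j else 0),
    sum_ite_eq']
  by_cases hk' : k + 1 < n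
  · simp [hk', show k ≠ n - 1 by omega]
  · obtain rfl : k = n - 1 := by omega
    simp [hk', finsetSum_coeff, mul_comm]

section Charpoly

variable [Nontrivial R] {f : R[X]}

lemma X_mul_sub_C_mul_eq_modByMonic (hf : f.Monic) (hfn : f.natDegree = n) {p : R[X]}
    (hp : p.degree < n) : X * p - C (p.coeff (n - 1)) * f = (X * p) %ₘ f := by
  refine ((div_modByMonic_unique (C (p.coeff (n - 1))) _ hf ⟨by ring, ?_⟩).2).symm
  rw [degree_eq_natDegree hf.ne_zero, hfn, degree_lt_iff_coeff_zero]
  intro m hm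
  rcases n with _ | n
  · simp [show p = 0 by simpa using hp]
  have hfm : f.coeff m = if m = n + 1 then 1 else 0 := by
    split_ifs with h
    · rw [h, ← hfn, hf.coeff_natDegree]
    · exact coeff_eq_zero_of_natDegree_lt (by omega)
  obtain ⟨m, rfl⟩ : ∃ m', m = m' + 1 := ⟨m - 1, by omega⟩
  simp only [coeff_sub, coeff_X_mul, coeff_C_mul, hfm]
  split_ifs with h
  · simp [show m = n by omega]
  · simp [coeff_eq_zero_of_degree_lt (hp.trans_le (by exact_mod_cast (by omega : n + 1 ≤ m)))]

lemma aeval_companionMatrix (hf : f.Monic) (hfn : f.natDegree = n) (q : R[X]) :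
    aeval (companionMatrix n fun i => f.coeff i) q = coeffMatrix n fun k => (q * X ^ k) %ₘ f := by
  induction q using Polynomial.induction_on with
  | C a =>
    ext i k
    rw [aeval_C, algebraMap_eq_diagonal, coeffMatrix, of_apply,
      (modByMonic_eq_self_iff hf).2 ?_]
    · simp [diagonal_apply, coeff_C_mul, coeff_X_pow, Fin.ext_iff]
    · exact (degree_C_mul_X_pow_le _ _).trans_lt
        (by rw [degree_eq_natDegree hf.ne_zero, hfn]; exact_mod_cast k.isLt)
  | add p q hp hq => rw [map_add, hp, hq, ← coeffMatrix_add]; simp [add_mul, add_modByMonic]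
  | monomial m a ih =>
    rw [pow_succ', ← mul_left_comm, map_mul, aeval_X, ih, companionMatrix_mul_coeffMatrix]
    congr 1
    funext k
    rw [X_mul_sub_C_mul_eq_modByMonic hf hfn ((degree_modByMonic_lt _ hf).trans_eq ?_)]
    · refine modByMonic_eq_of_dvd_sub hf ?_
      rw [mul_assoc X, ← mul_sub]
      exact dvd_mul_of_dvd_right (dvd_modByMonic_sub _ _) _
    · rw [degree_eq_natDegree hf.ne_zero, hfn]

theorem charpoly_companionMatrix (hf : f.Monic) (hfn : f.natDegree = n) :
    (companionMatrix n fun i => f.coeff i).charpoly = f := by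
  set A := companionMatrix n fun i => f.coeff i
  have hmod : A.charpoly %ₘ f = 0 := by
    have h0 := aeval_self_charpoly A
    rw [aeval_companionMatrix hf hfn] at h0
    ext m
    by_cases hm : m < n
    · simpa [coeffMatrix] using congr_fun (congr_fun h0 ⟨m, hm⟩) ⟨0, by omega⟩
    · refine coeff_eq_zero_of_degree_lt ((degree_modByMonic_lt _ hf).trans_le ?_)
      rw [degree_eq_natDegree hf.ne_zero, hfn]
      exact_mod_cast not_lt.1 hm
  refine eq_of_monic_of_dvd_of_natDegree_le hf (charpoly_monic A)
    ((modByMonic_eq_zero_iff_dvd hf).1 hmod) ?_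
  simp [hfn]

end Charpoly

lemma isIdempotentElem_mul_nonsing_inv {U D : Matrix (Fin n) (Fin n) R} (r : ℕ)
    (hU : IsUnit U.det) (hUtri : U.BlockTriangular id)
    (hDU : ∀ i k : Fin n, (k : ℕ) < r → D i k = U i k)
    (hD : ∀ i k : Fin n, r ≤ (i : ℕ) → D i k = 0) : IsIdempotentElem (D * U⁻¹) := by
  have := U.invertibleOfIsUnitDet hU
  have hW : ∀ j k : Fin n, r ≤ (j : ℕ) → (U⁻¹ * D) j k = 0 := fun j k hj =>
    (mul_apply ..).trans <| sum_eq_zero fun l _ => by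
      by_cases hl : l < j
      · rw [blockTriangular_inv_of_blockTriangular hUtri hl, zero_mul]
      · rw [hD l k (hj.trans (not_lt.1 hl)), mul_zero]
  have hDW : D * (U⁻¹ * D) = D :=
    calc D * (U⁻¹ * D) = U * (U⁻¹ * D) := by
          ext i k
          refine (mul_apply ..).trans ((sum_congr rfl fun j _ => ?_).trans (mul_apply ..).symm)
          by_cases hj : (j : ℕ) < r
          · rw [hDU i j hj]
          · rw [hW j k (not_lt.1 hj), mul_zero, mul_zero]
      _ = D := by rw [← Matrix.mul_assoc, mul_nonsing_inv _ hU, Matrix.one_mul]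
  calc D * U⁻¹ * (D * U⁻¹) = D * (U⁻¹ * D) * U⁻¹ := by simp only [Matrix.mul_assoc]
    _ = D * U⁻¹ := by rw [hDW]

/-- With `U := coeffMatrix n P`, the matrix `M := U * C_h * U⁻¹` (where `C_h` is the companion
matrix of `h`) sends `P k ↦ P (k + 1)` and `P (n - 1) ↦ -∑ h_j P j`; these conditions say that
`C_f - M` maps into `R[X]_{<r} = span (P 0, …, P (r - 1))` and is the identity there. -/
structure IsSplittingBasis (n r : ℕ) (f h : R[X]) (P : ℕ → R[X]) : Prop where
  monic : ∀ k < n, (P k).Monic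
  natDegree_eq : ∀ k < n, (P k).natDegree = k
  X_mul_sub_eq_self : ∀ k < r, X * P k - P (k + 1) = P k
  degree_X_mul_sub_lt : ∀ k, k + 1 < n → (X * P k - P (k + 1)).degree < (r : WithBot ℕ)
  degree_X_mul_add_sum_sub_lt :
    (X * P (n - 1) + ∑ j ∈ range n, C (h.coeff j) * P j - f).degree < (r : WithBot ℕ)

theorem IsSplittingBasis.exists_decomposition [Nontrivial R] {r : ℕ} {f h : R[X]}
    {P : ℕ → R[X]} (hP : IsSplittingBasis n r f h P) (hh : h.Monic) (hhn : h.natDegree = n)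
    (hr : r < n) :
    ∃ E M : Matrix (Fin n) (Fin n) R, companionMatrix n (fun i => f.coeff i) = E + M ∧
      IsIdempotentElem E ∧ M.charpoly = h := by
  set A := companionMatrix n fun i => f.coeff i
  set B := companionMatrix n fun i => h.coeff i
  set U := coeffMatrix n P
  have hcoeff : ∀ k < n, (P k).coeff (n - 1) = if k + 1 < n then 0 else 1 := fun k hk => by
    split_ifs with hk'
    · exact coeff_eq_zero_of_natDegree_lt (by rw [hP.natDegree_eq k hk]; omega)
    · obtain rfl : k = n - 1 := by omega
      simpa [hP.natDegree_eq _ hk] using (hP.monic _ hk).coeff_natDegree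
  have hUtri : U.BlockTriangular id :=
    blockTriangular_coeffMatrix fun k hk => (hP.natDegree_eq k hk).le
  have hU : IsUnit U.det := by
    rw [det_coeffMatrix fun k hk => ⟨hP.monic k hk, hP.natDegree_eq k hk⟩]
    exact isUnit_one
  set D := coeffMatrix n fun k => if k + 1 < n then X * P k - P (k + 1)
    else X * P (n - 1) + ∑ j ∈ range n, C (h.coeff j) * P j - f
  have hD : A * U - U * B = D := by
    rw [companionMatrix_mul_coeffMatrix, coeffMatrix_mul_companionMatrix, ← coeffMatrix_sub]
    refine coeffMatrix_congr fun k hk => ?_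
    rw [hcoeff k hk]
    split_ifs with hk'
    · simp
    · obtain rfl : k = n - 1 := by omega
      rw [map_one, one_mul, sub_neg_eq_add]
      ring
  refine ⟨D * U⁻¹, U * B * U⁻¹, ?_, isIdempotentElem_mul_nonsing_inv r hU hUtri ?_ ?_, ?_⟩
  · rw [← hD, Matrix.sub_mul, Matrix.mul_assoc A, mul_nonsing_inv _ hU, Matrix.mul_one,
      sub_add_cancel]
  · intro i k hk
    simp [D, U, coeffMatrix, show (k : ℕ) + 1 < n by omega, hP.X_mul_sub_eq_self k hk]
  · intro i k hi
    simp only [D, coeffMatrix, of_apply]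
    split_ifs with hk
    · exact coeff_eq_zero_of_degree_lt
        ((hP.degree_X_mul_sub_lt k hk).trans_le (by exact_mod_cast hi))
    · exact coeff_eq_zero_of_degree_lt
        (hP.degree_X_mul_add_sum_sub_lt.trans_le (by exact_mod_cast hi))
  · rw [charpoly_mul_comm, ← Matrix.mul_assoc, nonsing_inv_mul _ hU, Matrix.one_mul,
      charpoly_companionMatrix hh hhn]

section Construction

variable {r N : ℕ} {f h : R[X]}

/-- Equal to `h /ₘ X ^ r` when `h` is monic of degree `r + N + 1`. -/
noncomputable def tailPoly (r N : ℕ) (h : R[X]) : R[X] :=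
  X ^ (N + 1) + ∑ s ∈ range (N + 1), C (h.coeff (r + s)) * X ^ s

noncomputable def splittingQuot (r N : ℕ) (f h : R[X]) : R[X] :=
  (X ^ N * (f - ∑ j ∈ range r, C (h.coeff j) * (X - C 1) ^ j)) /ₘ tailPoly r N h

noncomputable def splittingBasis (r N : ℕ) (f h : R[X]) (k : ℕ) : R[X] :=
  if k ≤ r then (X - C 1) ^ k else (X ^ (k - r) * splittingQuot r N f h) /ₘ X ^ N

lemma monic_tailPoly (r N : ℕ) (h : R[X]) : (tailPoly r N h).Monic :=
  monic_X_pow_add (degree_sum_C_mul_X_pow_lt _ _)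

lemma X_mul_splittingBasis_sub_of_lt {k : ℕ} (hk : k < r) :
    X * splittingBasis r N f h k - splittingBasis r N f h (k + 1) = splittingBasis r N f h k := by
  simp only [splittingBasis, if_pos hk.le, if_pos (Nat.succ_le_of_lt hk), map_one]
  ring

variable [Nontrivial R]

lemma natDegree_tailPoly (r N : ℕ) (h : R[X]) : (tailPoly r N h).natDegree = N + 1 :=
  natDegree_X_pow_add_of_degree_lt (degree_sum_C_mul_X_pow_lt _ _)

lemma nextCoeff_tailPoly (r N : ℕ) (h : R[X]) :
    (tailPoly r N h).nextCoeff = h.coeff (r + N) := by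
  rw [nextCoeff_of_natDegree_pos (by rw [natDegree_tailPoly]; omega), natDegree_tailPoly,
    tailPoly, coeff_add, coeff_X_pow, finsetSum_coeff]
  simp [coeff_C_mul, coeff_X_pow]

variable (hf : f.Monic) (hfn : f.natDegree = r + N + 1) (htr : f.coeff (r + N) = -r)
  (hh : h.coeff (r + N) = 0)
include hf hfn htr hh

lemma degree_mul_tailPoly_sub_lt :
    ((X - C 1) ^ r * tailPoly r N h - (f - ∑ j ∈ range r, C (h.coeff j) * (X - C 1) ^ j)).degree
      < ↑(r + N) := by
  have hX1 := monic_X_sub_C (1 : R)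
  have hT := monic_tailPoly r N h
  rw [sub_sub_eq_add_sub, add_sub_right_comm, ← mem_degreeLT]
  refine Submodule.add_mem _ ?_ (mem_degreeLT.2 (degree_sum_C_mul_lt _ _ _ fun j hj => ?_))
  · have hnd : ((X - C 1) ^ r * tailPoly r N h).natDegree = r + N + 1 := by
      rw [(hX1.pow r).natDegree_mul hT, natDegree_X_sub_C_pow, natDegree_tailPoly]; ring
    rw [mem_degreeLT]
    convert degree_sub_lt_of_nextCoeff_eq ((hX1.pow r).mul hT) hf (hnd.trans hfn.symm) ?_ using 2
    · rw [hnd]; rfl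
    · rw [(hX1.pow r).nextCoeff_mul hT, hX1.nextCoeff_pow, nextCoeff_tailPoly, hh,
        nextCoeff_of_natDegree_pos (p := f) (by omega), hfn, Nat.add_sub_cancel, htr,
        nextCoeff_X_sub_C, nsmul_eq_mul, mul_neg, mul_one, add_zero]
  · rw [degree_eq_natDegree (hX1.pow j).ne_zero, natDegree_X_sub_C_pow]
    exact_mod_cast (mem_range.1 hj).trans_le (by omega)

lemma degree_X_pow_mul_sub_splittingQuot_lt (hr : 0 < r) :
    (X ^ N * (X - C 1) ^ r - splittingQuot r N f h).degree < ↑(r + N - 1) := by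
  set T := tailPoly r N h
  set F := f - ∑ j ∈ range r, C (h.coeff j) * (X - C 1) ^ j
  have hT := monic_tailPoly r N h
  have hdiv := modByMonic_add_div (X ^ N * F) T
  have key : T * (X ^ N * (X - C 1) ^ r - splittingQuot r N f h) =
      X ^ N * ((X - C 1) ^ r * T - F) + (X ^ N * F) %ₘ T := by
    rw [splittingQuot]; linear_combination -hdiv
  rw [← hT.degree_mul_lt_iff, natDegree_tailPoly, key, ← mem_degreeLT]
  refine Submodule.add_mem _ (degreeLT_mono (m := N + (r + N)) (by omega) ?_)
    (degreeLT_mono (m := N + 1) (by omega) ?_)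
  · have := ((monic_X_pow N).degree_mul_lt_iff (d := r + N)).2
      (degree_mul_tailPoly_sub_lt hf hfn htr hh)
    rwa [natDegree_X_pow, ← mem_degreeLT] at this
  · exact mem_degreeLT.2 ((degree_modByMonic_lt _ hT).trans_eq
      (by rw [degree_eq_natDegree hT.ne_zero, natDegree_tailPoly]))

lemma degree_X_pow_mul_splittingBasis_sub_lt (hr : 0 < r) {k : ℕ} (hk : r ≤ k) :
    (X ^ N * splittingBasis r N f h k - X ^ (k - r) * splittingQuot r N f h).degree
      < ↑(r + N - 1) := by
  rcases hk.eq_or_lt with rfl | hk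
  · simpa [splittingBasis] using degree_X_pow_mul_sub_splittingQuot_lt hf hfn htr hh hr
  set Z := X ^ (k - r) * splittingQuot r N f h
  have hdiv := modByMonic_add_div Z (X ^ N)
  have : X ^ N * splittingBasis r N f h k - Z = -(Z %ₘ X ^ N) := by
    rw [splittingBasis, if_neg (by omega)]; linear_combination hdiv
  rw [this, degree_neg]
  exact (degree_modByMonic_lt _ (monic_X_pow N)).trans_le
    (by rw [degree_X_pow]; exact_mod_cast (by omega : N ≤ r + N - 1))

lemma splittingBasis_monic_and_natDegree (hr : 0 < r) (k : ℕ) :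
    (splittingBasis r N f h k).Monic ∧ (splittingBasis r N f h k).natDegree = k := by
  by_cases hkr : k ≤ r
  · simp only [splittingBasis, if_pos hkr]
    exact ⟨(monic_X_sub_C 1).pow k, natDegree_X_sub_C_pow 1 k⟩
  set B : R[X] := X ^ (k - r) * (X - C 1) ^ r
  have hB : B.Monic := (monic_X_pow _).mul ((monic_X_sub_C 1).pow r)
  have hBdeg : B.natDegree = k := by
    rw [(monic_X_pow _).natDegree_mul ((monic_X_sub_C 1).pow r), natDegree_X_pow,
      natDegree_X_sub_C_pow]; omega
  have hlt : (splittingBasis r N f h k - B).degree < B.degree := by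
    rw [degree_eq_natDegree hB.ne_zero, hBdeg, ← (monic_X_pow N).degree_mul_lt_iff,
      natDegree_X_pow, ← mem_degreeLT]
    have h1 := degree_X_pow_mul_splittingBasis_sub_lt hf hfn htr hh hr (k := k) (by omega)
    have h2 := ((monic_X_pow (k - r)).degree_mul_lt_iff).2
      (degree_X_pow_mul_sub_splittingQuot_lt hf hfn htr hh hr)
    rw [natDegree_X_pow] at h2
    rw [← mem_degreeLT] at h1 h2
    convert Submodule.sub_mem _ (degreeLT_mono (n := N + k) (by omega) h1)
      (degreeLT_mono (n := N + k) (by omega) h2) using 1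
    ring
  rw [← add_sub_cancel B (splittingBasis r N f h k)]
  exact ⟨hB.add_of_left hlt, (natDegree_add_eq_left_of_degree_lt hlt).trans hBdeg⟩

lemma degree_X_mul_splittingBasis_sub_lt (hr : 0 < r) {k : ℕ} (hk : r ≤ k) :
    (X * splittingBasis r N f h k - splittingBasis r N f h (k + 1)).degree
      < (r : WithBot ℕ) := by
  rw [← (monic_X_pow N).degree_mul_lt_iff, natDegree_X_pow, ← mem_degreeLT]
  have h1 := degree_X_pow_mul_splittingBasis_sub_lt hf hfn htr hh hr hk
  have h2 := degree_X_pow_mul_splittingBasis_sub_lt hf hfn htr hh hr (k := k + 1) (by omega)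
  rw [← monic_X.degree_mul_lt_iff, natDegree_X] at h1
  rw [← mem_degreeLT] at h1 h2
  convert Submodule.sub_mem _ (degreeLT_mono (n := N + r) (by omega) h1)
    (degreeLT_mono (n := N + r) (by omega) h2) using 1
  rw [show k + 1 - r = k - r + 1 by omega]
  ring

lemma degree_X_mul_splittingBasis_add_sum_sub_lt (hr : 0 < r) :
    (X * splittingBasis r N f h (r + N) +
      ∑ j ∈ range (r + N + 1), C (h.coeff j) * splittingBasis r N f h j - f).degree
      < (r : WithBot ℕ) := by
  set P := splittingBasis r N f h
  set Y := splittingQuot r N f h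
  set T := tailPoly r N h
  set F := f - ∑ j ∈ range r, C (h.coeff j) * (X - C 1) ^ j
  have hdiv : (X ^ N * F) %ₘ T + T * Y = X ^ N * F := modByMonic_add_div _ _
  have hlow : ∑ j ∈ range r, C (h.coeff j) * P j =
      ∑ j ∈ range r, C (h.coeff j) * (X - C 1) ^ j :=
    sum_congr rfl fun j hj => by simp [P, splittingBasis, (mem_range.1 hj).le]
  have hhigh : ∑ s ∈ range (N + 1), C (h.coeff (r + s)) * (X ^ N * P (r + s) - X ^ s * Y) =
      X ^ N * ∑ s ∈ range (N + 1), C (h.coeff (r + s)) * P (r + s) - (T - X ^ (N + 1)) * Y := by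
    simp only [T, tailPoly, add_sub_cancel_left, mul_sub, mul_sum, sum_mul, sum_sub_distrib]
    congr 1 <;> exact sum_congr rfl fun s _ => by ring
  have key : X ^ N * (X * P (r + N) + ∑ j ∈ range (r + N + 1), C (h.coeff j) * P j - f) =
      X * (X ^ N * P (r + N) - X ^ N * Y) +
        ∑ s ∈ range (N + 1), C (h.coeff (r + s)) * (X ^ N * P (r + s) - X ^ s * Y) -
        (X ^ N * F) %ₘ T := by
    rw [hhigh, add_assoc r N 1, sum_range_add, hlow]
    linear_combination hdiv
  rw [← (monic_X_pow N).degree_mul_lt_iff, natDegree_X_pow, key, ← mem_degreeLT]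
  refine Submodule.sub_mem _ (Submodule.add_mem _ ?_ (Submodule.sum_mem _ fun s _ => ?_)) ?_
  · have h1 := degree_X_pow_mul_splittingBasis_sub_lt hf hfn htr hh hr (k := r + N) (by omega)
    rw [Nat.add_sub_cancel_left, ← monic_X.degree_mul_lt_iff, natDegree_X] at h1
    exact degreeLT_mono (by omega) (mem_degreeLT.2 h1)
  · have h1 := degree_X_pow_mul_splittingBasis_sub_lt hf hfn htr hh hr (k := r + s) (by omega)
    rw [Nat.add_sub_cancel_left] at h1
    rw [← smul_eq_C_mul]
    exact Submodule.smul_mem _ _ (degreeLT_mono (by omega) (mem_degreeLT.2 h1))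
  · refine degreeLT_mono (m := N + 1) (by omega) (mem_degreeLT.2 ?_)
    exact (degree_modByMonic_lt _ (monic_tailPoly r N h)).trans_eq
      (by rw [degree_eq_natDegree (monic_tailPoly r N h).ne_zero, natDegree_tailPoly])

theorem isSplittingBasis_splittingBasis (hr : 0 < r) :
    IsSplittingBasis (r + N + 1) r f h (splittingBasis r N f h) where
  monic k _ := (splittingBasis_monic_and_natDegree hf hfn htr hh hr k).1
  natDegree_eq k _ := (splittingBasis_monic_and_natDegree hf hfn htr hh hr k).2
  X_mul_sub_eq_self _ := X_mul_splittingBasis_sub_of_lt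
  degree_X_mul_sub_lt k _ := by
    by_cases hk : k < r
    · rw [X_mul_splittingBasis_sub_of_lt hk, splittingBasis, if_pos hk.le,
        degree_eq_natDegree ((monic_X_sub_C 1).pow k).ne_zero, natDegree_X_sub_C_pow]
      exact_mod_cast hk
    · exact degree_X_mul_splittingBasis_sub_lt hf hfn htr hh hr (not_lt.1 hk)
  degree_X_mul_add_sum_sub_lt := by
    simpa using degree_X_mul_splittingBasis_add_sum_sub_lt hf hfn htr hh hr

end Construction

theorem exists_isIdempotentElem_add_charpoly_eq [Nontrivial R] {r : ℕ} {f h : R[X]}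
    (hf : f.Monic) (hfn : f.natDegree = n) (hh : h.Monic) (hhn : h.natDegree = n)
    (hh1 : h.coeff (n - 1) = 0) (hr : 0 < r) (hrn : r < n) (htr : f.coeff (n - 1) = -r) :
    ∃ E M : Matrix (Fin n) (Fin n) R, companionMatrix n (fun i => f.coeff i) = E + M ∧
      IsIdempotentElem E ∧ M.charpoly = h := by
  obtain ⟨N, rfl⟩ : ∃ N, n = r + N + 1 := ⟨n - 1 - r, by omega⟩
  rw [Nat.add_sub_cancel] at hh1 htr
  exact (isSplittingBasis_splittingBasis hf hfn htr hh1 hr).exists_decomposition hh hhn (by omega)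

end CompanionMatrix

theorem stmt_14_general {p : ℕ} [Fact p.Prime] (n : ℕ) (hpn : p < n)
    (c : Fin n → ZMod p) (g : Polynomial (ZMod p))
    (hg : g.degree ≤ (n - 2 : ℕ)) :
    ∃ E M : Matrix (Fin n) (Fin n) (ZMod p),
      companionMatrix n c = E + M ∧
      E ^ 2 = E ∧
      M.charpoly = Polynomial.X ^ n + g := by
  have hp := (Fact.out : p.Prime)
  have : NeZero p := ⟨hp.ne_zero⟩
  have hn : 2 < n := hp.two_le.trans_lt hpn
  obtain ⟨f, hf, hfn, hfc⟩ := exists_monic_natDegree_coeff_eq c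
  have hg1 : g.degree < ↑(n - 1) := hg.trans_lt (by exact_mod_cast (by omega : n - 2 < n - 1))
  have hgn : g.degree < n := hg1.trans_le (by exact_mod_cast (by omega : n - 1 ≤ n))
  -- `(-a - 1).val + 1` is the representative of `-a` in `[1, p]`
  set a := c ⟨n - 1, by omega⟩
  have hr : (((-a - 1).val + 1 : ℕ) : ZMod p) = -a := by simp
  have hrn : (-a - 1).val + 1 < n := by have := ZMod.val_lt (-a - 1); omega
  have htr : f.coeff (n - 1) = -(((-a - 1).val + 1 : ℕ) : ZMod p) := by
    rw [hr, neg_neg]; exact hfc ⟨n - 1, by omega⟩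
  have hh1 : (X ^ n + g).coeff (n - 1) = 0 := by
    rw [coeff_add, coeff_X_pow, if_neg (by omega), coeff_eq_zero_of_degree_lt hg1, add_zero]
  obtain ⟨E, M, hCEM, hE, hM⟩ := CompanionMatrix.exists_isIdempotentElem_add_charpoly_eq hf hfn
    (monic_X_pow_add hgn) (natDegree_X_pow_add_of_degree_lt hgn) hh1 (Nat.succ_pos _) hrn htr
  refine ⟨E, M, ?_, sq E ▸ hE, hM⟩
  rw [← hCEM]
  exact congrArg _ (funext fun i => (hfc i).symm)

/-- For a prime `p` and `n ≥ 3` with `p < n`, every `n × n` companion matrix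
`C` over `𝔽_p` decomposes as `C = E + M` with `E` idempotent and
`χ_M = X^n + g`, for any polynomial `g` of degree at most `n - 2`. -/
theorem stmt_14 {p : ℕ} [Fact p.Prime] (n : ℕ) (hn : 3 ≤ n) (hpn : p < n)
    (c : Fin n → ZMod p) (g : Polynomial (ZMod p))
    (hg : g.degree ≤ (n - 2 : ℕ)) :
    ∃ E M : Matrix (Fin n) (Fin n) (ZMod p),
      companionMatrix n c = E + M ∧
      E ^ 2 = E ∧
      M.charpoly = Polynomial.X ^ n + g :=
  stmt_14_general n hpn c g hg
end

section
/- Let n ≥ 3 be an integer and let F be a field such that every companion matrix C ∈ M_n(F) is nil-clean. Then F is isomorphic to the prime field F_p for some prime p with p < n; equivalently, F has prime characteristic p < n and every element of F is of the form k·1 for some non-negative integer k. -/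
/-!
A nilpotent matrix has trace `0`, and an idempotent matrix `E` has trace `rank E`, with `E = 0`
when the rank is `0` and `E = 1` when it is `n`. The trace of the companion matrix `C_c` is the
arbitrary scalar `-c_{n-1}`, so every element of `F` is `r • 1` for some `r ≤ n`: thus `F ≅ 𝔽_p`,
and `p ∣ r + 1` for the `r` representing `-1`, so `p ≤ n + 1`.

Both borderline characteristics are excluded through `C^k e₀ = e_k` for `k < n` and
`C^n e₀ = -c`. In characteristic `n`, the companion matrix of `X^n + X` has trace `0`, so it
would be nilpotent or unipotent, i.e. `C^n = 0` or `C^n = 1`; but `C^n e₀ = -e₁`. In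
characteristic `n + 1`, the companion matrix of `X^n + X^{n-1}` has trace `-1 = n`, so it would be
unipotent and `C^{n+1} = 1`; but `C^{n+1} e₀ = e_{n-1}`.
-/

open Matrix Polynomial

namespace Matrix

variable {ι K : Type*} [Fintype ι] [DecidableEq ι] [Field K]

theorem trace_eq_rank_of_isIdempotentElem_s15 {E : Matrix ι ι K} (hE : IsIdempotentElem E) :
    E.trace = E.rank := by
  have hE' : IsIdempotentElem (toLin' E) := hE.map toLinAlgEquiv'
  rw [← trace_toLin'_eq, (LinearMap.IsIdempotentElem.isProj_range _ hE').trace, rank, toLin'_apply']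

theorem eq_zero_of_rank_eq_zero {A : Matrix ι ι K} (hA : A.rank = 0) : A = 0 := by
  rw [rank, Submodule.finrank_eq_zero, LinearMap.range_eq_bot, ← toLin'_apply'] at hA
  simpa using congrArg LinearMap.toMatrix' hA

theorem eq_one_of_isIdempotentElem_of_rank_eq_card {E : Matrix ι ι K} (hE : IsIdempotentElem E)
    (hr : E.rank = Fintype.card ι) : E = 1 := by
  have htop : LinearMap.range E.mulVecLin = ⊤ :=
    Submodule.eq_top_of_finrank_eq (by rw [← rank, hr, Module.finrank_fintype_fun_eq_card])
  have hid : E.mulVecLin = LinearMap.id := by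
    refine LinearMap.ext fun v => ?_
    obtain ⟨w, rfl⟩ := LinearMap.range_eq_top.mp htop v
    simp only [mulVecLin_apply, mulVec_mulVec, hE.eq, LinearMap.id_apply]
  rw [← toLin'_apply'] at hid
  simpa using congrArg LinearMap.toMatrix' hid

theorem pow_card_eq_zero_of_isNilpotent {N : Matrix ι ι K} (hN : IsNilpotent N) :
    N ^ Fintype.card ι = 0 := by
  have hchar : N.charpoly = X ^ Fintype.card ι :=
    sub_eq_zero.mp (isNilpotent_charpoly_sub_pow_of_isNilpotent hN).eq_zero
  simpa [hchar] using N.aeval_self_charpoly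

theorem pow_char_eq_one_of_isNilpotent_sub_one [Nonempty ι] {p : ℕ} [Fact p.Prime] [CharP K p]
    (hp : Fintype.card ι ≤ p) {A : Matrix ι ι K} (hA : IsNilpotent (A - 1)) : A ^ p = 1 := by
  have hzero : (A - 1) ^ p = 0 := by
    rw [← Nat.add_sub_cancel' hp, pow_add, pow_card_eq_zero_of_isNilpotent hA, zero_mul]
  rwa [sub_pow_char_of_commute p (Commute.one_right A), one_pow, sub_eq_zero] at hzero

end Matrix

theorem IsNilClean.exists_trace_eq_natCast {ι K : Type*} [Fintype ι] [DecidableEq ι] [Field K]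
    {A : Matrix ι ι K} (hA : IsNilClean A) :
    ∃ r ≤ Fintype.card ι, A.trace = r ∧ (r = 0 → IsNilpotent A) ∧
      (r = Fintype.card ι → IsNilpotent (A - 1)) := by
  obtain ⟨E, N, hE, hN, rfl⟩ := hA
  have hE' : IsIdempotentElem E := by rwa [IsIdempotentElem, ← sq]
  refine ⟨E.rank, E.rank_le_card_width, ?_, fun hr => ?_, fun hr => ?_⟩
  · rw [trace_add, trace_eq_rank_of_isIdempotentElem_s15 hE',
      (isNilpotent_trace_of_isNilpotent hN).eq_zero, add_zero]
  · simpa [eq_zero_of_rank_eq_zero hr] using hN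
  · simpa [eq_one_of_isIdempotentElem_of_rank_eq_card hE' hr] using hN

theorem nonempty_ringEquiv_zmod_of_surjective_natCast {R : Type*} [Ring R] (p : ℕ) [CharP R p]
    (h : Function.Surjective (Nat.cast : ℕ → R)) : Nonempty (R ≃+* ZMod p) := by
  refine ⟨(RingEquiv.ofBijective (ZMod.castHom (dvd_refl p) R)
    ⟨ZMod.castHom_injective R, fun a => ?_⟩).symm⟩
  obtain ⟨r, rfl⟩ := h a
  exact ⟨r, map_natCast _ r⟩

section companionMatrix

variable {R : Type*} [Ring R] {n : ℕ}

theorem trace_companionMatrix (hn : 0 < n) (c : Fin n → R) :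
    (companionMatrix n c).trace = -c ⟨n - 1, by omega⟩ := by
  rw [Matrix.trace, Finset.sum_eq_single ⟨n - 1, by omega⟩]
  · simp [companionMatrix]
  · intro i _ hi
    have : (i : ℕ) ≠ n - 1 := fun h => hi (Fin.ext h)
    simp [companionMatrix, this]
  · simp

theorem companionMatrix_mulVec_single_of_lt (c : Fin n → R) (j : Fin n) (hj : (j : ℕ) + 1 < n) :
    companionMatrix n c *ᵥ Pi.single j 1 = Pi.single ⟨j + 1, hj⟩ 1 := by
  ext i
  have : (j : ℕ) ≠ n - 1 := by omega
  by_cases hij : (i : ℕ) = j + 1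
  · obtain rfl : i = ⟨j + 1, hj⟩ := Fin.ext hij
    simp [companionMatrix]
  · have hi : i ≠ ⟨j + 1, hj⟩ := fun h => hij (by rw [h])
    simp [companionMatrix, mulVec_single, hij, this, Pi.single_eq_of_ne hi]

theorem companionMatrix_pow_mulVec_single_zero (c : Fin n → R) (k : ℕ) (hk : k < n) :
    companionMatrix n c ^ k *ᵥ Pi.single ⟨0, by omega⟩ 1 = Pi.single ⟨k, hk⟩ 1 := by
  induction k with
  | zero => rw [pow_zero, one_mulVec]
  | succ k ih =>
    rw [pow_succ', ← mulVec_mulVec, ih (by omega),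
      companionMatrix_mulVec_single_of_lt c ⟨k, by omega⟩ hk]

theorem companionMatrix_pow_self_mulVec_single_zero (hn : 0 < n) (c : Fin n → R) :
    companionMatrix n c ^ n *ᵥ Pi.single ⟨0, hn⟩ 1 = -c := by
  obtain ⟨m, rfl⟩ : ∃ m, n = m + 1 := ⟨n - 1, by omega⟩
  rw [pow_succ', ← mulVec_mulVec, companionMatrix_pow_mulVec_single_zero c m (by omega)]
  ext i
  have : (i : ℕ) ≠ m + 1 := by omega
  simp [companionMatrix, mulVec_single, this]

variable {F : Type*} [Field F]

theorem exists_natCast_eq_of_forall_isNilClean_companionMatrix (hn : 0 < n)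
    (h : ∀ c : Fin n → F, IsNilClean (companionMatrix n c)) (a : F) : ∃ r ≤ n, (r : F) = a := by
  obtain ⟨r, hr, htr, -, -⟩ := (h (Pi.single ⟨n - 1, by omega⟩ (-a))).exists_trace_eq_natCast
  refine ⟨r, by simpa using hr, ?_⟩
  simp [← htr, trace_companionMatrix hn]

theorem not_isNilClean_companionMatrix_single_one [CharP F n] (hn : 3 ≤ n) :
    ¬ IsNilClean (companionMatrix n (Pi.single ⟨1, by omega⟩ (1 : F))) := by
  set c : Fin n → F := Pi.single ⟨1, by omega⟩ 1
  set C := companionMatrix n c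
  intro hC
  have : Fact n.Prime := ⟨CharP.char_is_prime_of_two_le F n (by omega)⟩
  obtain ⟨r, hr, htr, hr0, hrn⟩ := hC.exists_trace_eq_natCast
  rw [Fintype.card_fin] at hr hrn
  have hCn := companionMatrix_pow_self_mulVec_single_zero (by omega) c
  have hrn_dvd : n ∣ r := by
    rw [← CharP.cast_eq_zero_iff F, ← htr, trace_companionMatrix (by omega), neg_eq_zero]
    exact Pi.single_eq_of_ne (by rw [Ne, Fin.mk.injEq]; omega) _
  rcases Nat.eq_zero_or_pos r with rfl | hpos
  · have hCn_zero : C ^ n = 0 := by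
      simpa using pow_card_eq_zero_of_isNilpotent (hr0 rfl)
    rw [hCn_zero, zero_mulVec] at hCn
    simpa [c] using congrFun hCn ⟨1, by omega⟩
  · have hCn_one : C ^ n = 1 := pow_char_eq_one_of_isNilpotent_sub_one
      (by simp) (hrn (le_antisymm hr (Nat.le_of_dvd hpos hrn_dvd)))
    rw [hCn_one, one_mulVec] at hCn
    simpa [c] using congrFun hCn ⟨0, by omega⟩

theorem not_isNilClean_companionMatrix_single_last [CharP F (n + 1)] (hn : 2 ≤ n) :
    ¬ IsNilClean (companionMatrix n (Pi.single ⟨n - 1, by omega⟩ (1 : F))) := by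
  set c : Fin n → F := Pi.single ⟨n - 1, by omega⟩ 1
  set C := companionMatrix n c
  intro hC
  have : Fact (n + 1).Prime := ⟨CharP.char_is_prime_of_two_le F (n + 1) (by omega)⟩
  have : NeZero n := ⟨by omega⟩
  obtain ⟨r, hr, htr, -, hrn⟩ := hC.exists_trace_eq_natCast
  rw [Fintype.card_fin] at hr hrn
  have hr_dvd : n + 1 ∣ r + 1 := by
    rw [← CharP.cast_eq_zero_iff F, Nat.cast_succ, ← htr, trace_companionMatrix (by omega)]
    simp [c]
  have hCp : C ^ (n + 1) = 1 := pow_char_eq_one_of_isNilpotent_sub_one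
    (by simp) (hrn (by have := Nat.le_of_dvd (by omega) hr_dvd; omega))
  have hCn := companionMatrix_pow_self_mulVec_single_zero (by omega) c
  have hCn_sub_one : C ^ (n - 1) *ᵥ Pi.single ⟨0, by omega⟩ 1 = c :=
    companionMatrix_pow_mulVec_single_zero c (n - 1) (by omega)
  -- `C^{n+1} e₀ = -C c = -C (C^{n-1} e₀) = -C^n e₀ = c`
  have hCn1 : C ^ (n + 1) *ᵥ Pi.single ⟨0, by omega⟩ 1 = c := by
    rw [pow_succ', ← mulVec_mulVec, hCn, mulVec_neg, ← hCn_sub_one, mulVec_mulVec, ← pow_succ',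
      Nat.sub_add_cancel (by omega), hCn, neg_neg, hCn_sub_one]
  rw [hCp, one_mulVec] at hCn1
  have : (0 : ℕ) ≠ n - 1 := by omega
  simpa [c, Pi.single_apply, Fin.ext_iff, this] using congrFun hCn1 ⟨0, by omega⟩

end companionMatrix

/-- If `n ≥ 3` and every `n × n` companion matrix over a field `F` is
nil-clean, then `F` is isomorphic to the prime field `𝔽_p` for some prime
`p < n`. -/
theorem stmt_15 {F : Type*} [Field F] (n : ℕ) (hn : 3 ≤ n)
    (h : ∀ c : Fin n → F, IsNilClean (companionMatrix n c)) :
    ∃ p : ℕ, p.Prime ∧ p < n ∧ Nonempty (F ≃+* ZMod p) := by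
  have hcast := exists_natCast_eq_of_forall_isNilClean_companionMatrix (by omega) h
  set p := ringChar F
  obtain ⟨r, hr, hr_neg_one⟩ := hcast (-1)
  have hp_dvd : p ∣ r + 1 := by
    rw [← ringChar.spec, Nat.cast_succ, hr_neg_one, neg_add_cancel]
  have hp : p.Prime :=
    (CharP.char_is_prime_or_zero F p).resolve_right fun hp0 => by simp [hp0] at hp_dvd
  have hp_ne : p ≠ n := fun hpn => by
    have : CharP F n := hpn ▸ ringChar.charP F
    exact not_isNilClean_companionMatrix_single_one hn (h _)
  have hp_ne_succ : p ≠ n + 1 := fun hpn => by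
    have : CharP F (n + 1) := hpn ▸ ringChar.charP F
    exact not_isNilClean_companionMatrix_single_last (by omega) (h _)
  refine ⟨p, hp, ?_, nonempty_ringEquiv_zmod_of_surjective_natCast p fun a => ?_⟩
  · have := Nat.le_of_dvd (by omega) hp_dvd
    omega
  · obtain ⟨r, -, hr⟩ := hcast a
    exact ⟨r, hr⟩
end

section
/- Let p be a prime and let C = C_{c_0, c_1} ∈ M_2(F_p) be a 2×2 companion matrix over the field F_p with p elements. Then C is nil-clean if and only if (c_0 = 0 and c_1 = 0), or (c_0 = 1 and c_1 = −2), or c_1 = −1. -/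
/-! By Cayley–Hamilton a `2 × 2` matrix satisfies `M² = tr M • M - det M • 1`. Hence over a field
a matrix is nilpotent iff its trace and determinant vanish, and an idempotent `E` with `tr E ≠ 1`
is a scalar, so `E = 0` or `E = 1`. Writing `C = E + N`, the three cases give
`tr C = det C = 0`, `tr (C - 1) = det (C - 1) = 0`, or `tr C = 1`, which are the three conditions;
conversely `E = 0`, `E = 1` and `E = !![0, -c₀; 0, 1]` are witnesses. -/

theorem isNilClean_iff_exists_isNilpotent_sub {R : Type*} [Ring R] {a : R} :
    IsNilClean a ↔ ∃ e : R, e ^ 2 = e ∧ IsNilpotent (a - e) := by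
  constructor
  · rintro ⟨e, n, he, hn, rfl⟩
    exact ⟨e, he, by rwa [add_sub_cancel_left]⟩
  · rintro ⟨e, he, hn⟩
    exact ⟨e, a - e, he, hn, (add_sub_cancel e a).symm⟩

namespace Matrix

section CommRing

variable {R : Type*} [CommRing R]

theorem sq_sub_trace_smul_add_det_smul_one (M : Matrix (Fin 2) (Fin 2) R) :
    M ^ 2 - M.trace • M + M.det • (1 : Matrix (Fin 2) (Fin 2) R) = 0 := by
  rw [M.eta_fin_two, sq]
  ext i j
  fin_cases i <;> fin_cases j <;> simp [trace_fin_two_of, det_fin_two_of] <;> ring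

theorem isNilpotent_iff_trace_eq_zero_and_det_eq_zero [IsReduced R]
    {N : Matrix (Fin 2) (Fin 2) R} : IsNilpotent N ↔ N.trace = 0 ∧ N.det = 0 := by
  constructor
  · rintro ⟨k, hk⟩
    refine ⟨(isNilpotent_trace_of_isNilpotent ⟨k, hk⟩).eq_zero, IsNilpotent.eq_zero ⟨k, ?_⟩⟩
    rw [← det_pow, hk, det_zero]
  · rintro ⟨htr, hdet⟩
    exact ⟨2, by simpa [htr, hdet] using N.sq_sub_trace_smul_add_det_smul_one⟩

end CommRing

theorem eq_zero_or_eq_one_or_trace_eq_one_of_sq_eq_self {F : Type*} [Field F]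
    {E : Matrix (Fin 2) (Fin 2) F} (hE : E ^ 2 = E) : E = 0 ∨ E = 1 ∨ E.trace = 1 := by
  by_cases htr : E.trace = 1
  · exact Or.inr (Or.inr htr)
  have hCH := E.sq_sub_trace_smul_add_det_smul_one
  rw [hE] at hCH
  have hlin : (1 - E.trace) • E = -(E.det • 1) := by
    rw [sub_smul, one_smul]
    exact eq_neg_of_add_eq_zero_left hCH
  obtain ⟨μ, rfl⟩ : ∃ μ : F, E = scalar (Fin 2) μ := by
    refine ⟨(1 - E.trace)⁻¹ * -E.det, ?_⟩
    rw [scalar_apply, ← smul_one_eq_diagonal, mul_smul, neg_smul, ← hlin, smul_smul,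
      inv_mul_cancel₀ (sub_ne_zero.mpr (Ne.symm htr)), one_smul]
  rw [← map_pow, scalar_inj] at hE
  rcases eq_zero_or_one_of_sq_eq_self hE with rfl | rfl
  · exact Or.inl (map_zero _)
  · exact Or.inr (Or.inl (map_one _))

end Matrix

open Matrix

lemma companionMatrix_two {R : Type*} [Ring R] (c₀ c₁ : R) :
    companionMatrix 2 ![c₀, c₁] = !![0, -c₀; 1, -c₁] := by
  ext i j
  fin_cases i <;> fin_cases j <;> simp [companionMatrix]

theorem isNilClean_companionMatrix_two_iff {F : Type*} [Field F] (c₀ c₁ : F) :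
    IsNilClean (companionMatrix 2 ![c₀, c₁]) ↔
      (c₀ = 0 ∧ c₁ = 0) ∨ (c₀ = 1 ∧ c₁ = -2) ∨ c₁ = -1 := by
  simp only [isNilClean_iff_exists_isNilpotent_sub, companionMatrix_two,
    isNilpotent_iff_trace_eq_zero_and_det_eq_zero]
  have hsub_one : !![0, -c₀; 1, -c₁] - 1 = !![-1, -c₀; 1, -c₁ - 1] := by simp [one_fin_two]
  constructor
  · rintro ⟨E, hE, htr, hdet⟩
    rcases eq_zero_or_eq_one_or_trace_eq_one_of_sq_eq_self hE with rfl | rfl | hEtr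
    · simp only [sub_zero, trace_fin_two_of, det_fin_two_of] at htr hdet
      exact Or.inl ⟨by linear_combination hdet, by linear_combination -htr⟩
    · simp only [hsub_one, trace_fin_two_of, det_fin_two_of] at htr hdet
      exact Or.inr (Or.inl ⟨by linear_combination hdet + htr, by linear_combination -htr⟩)
    · rw [trace_sub, hEtr, trace_fin_two_of] at htr
      exact Or.inr (Or.inr (by linear_combination -htr))
  · rintro (⟨rfl, rfl⟩ | ⟨rfl, rfl⟩ | rfl)
    · exact ⟨0, zero_pow two_ne_zero, by simp [trace_fin_two_of, det_fin_two_of]⟩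
    · exact ⟨1, one_pow 2, by rw [hsub_one]; norm_num [trace_fin_two_of, det_fin_two_of]⟩
    · exact ⟨!![0, -c₀; 0, 1], by simp [sq], by simp [trace_fin_two, det_fin_two]⟩

theorem stmt_19_general {p : ℕ} [Fact p.Prime] (c₀ c₁ : ZMod p) :
    IsNilClean (companionMatrix 2 ![c₀, c₁]) ↔
      (c₀ = 0 ∧ c₁ = 0) ∨ (c₀ = 1 ∧ c₁ = -2) ∨ c₁ = -1 :=
  isNilClean_companionMatrix_two_iff c₀ c₁

/-- A `2 × 2` companion matrix `C_{c_0, c_1}` over `𝔽_p` is nil-clean iff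
`c_0 = c_1 = 0`, or `c_0 = 1` and `c_1 = -2`, or `c_1 = -1`. -/
theorem stmt_19 {p : ℕ} (hp : p.Prime) [Fact p.Prime] (c₀ c₁ : ZMod p) :
    IsNilClean (companionMatrix 2 ![c₀, c₁]) ↔
      (c₀ = 0 ∧ c₁ = 0) ∨ (c₀ = 1 ∧ c₁ = -2) ∨ c₁ = -1 :=
  stmt_19_general c₀ c₁
end
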